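/- Let T : Δ → Δ be the tower map of an induced weak Gibbs Markov map f^R, and let λ₁ be a probability measure on Δ with φ₁ = dλ₁/dm ∈ ℱ_β⁺(Δ) with constant C′_{φ₁}. Then there exists C₁ > 0, depending on C′_{φ₁}, such that for all n ≥ 1, every element ω of η_n = ⋁_{i=0}^{n−1} T^{−i}(η), and all x, y ∈ Tⁿ(ω), one has (dT_*ⁿ(λ₁|ω)/dm)(x) / (dT_*ⁿ(λ₁|ω)/dm)(y) ≤ C₁. Moreover, C₁ can be taken of the form C′_T·(1 + C′_{φ₁}·β^i), where i is the number of visits of ω to the base Δ₀ up to time n and C′_T does not depend on φ₁; in particular the dependence on C′_{φ₁} can be removed if the number of visits of ω to Δ₀ up to time n is sufficiently large. -/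

import Mathlib

open MeasureTheory Set Filter Topology

noncomputable section

namespace WGMPaper

variable {X M : Type*}

/-- Separation time of two points with respect to the map `F` and the partition
indexed by `p` (each partition element is a fiber of `p`). -/
def sepTime (F : X → X) (p : X → ℕ) (x y : X) : ℕ :=
  sInf {n | p (F^[n] x) ≠ p (F^[n] y)}

/-- The element of the partition `𝒫₀` of `Δ₀` with index `i`. -/
def pElem (Δ₀ : Set X) (p : X → ℕ) (i : ℕ) : Set X := Δ₀ ∩ p ⁻¹' {i}

/-- The element of the refined partition `𝒫₀ⁿ = ⋁_{i<n} F⁻ⁱ 𝒫₀` determined by the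
word `w` (with `n = w.length`). -/
def pElemN (Δ₀ : Set X) (F : X → X) (p : X → ℕ) (w : List ℕ) : Set X :=
  Δ₀ ∩ {x | ∀ k : Fin w.length, p (F^[(k : ℕ)] x) = w.get k}

/-- `F : Δ₀ → Δ₀` is a weak Gibbs Markov map with respect to the partition indexed by
`p`, Jacobian `J`, Gibbs constants `CF`, `β` and long-branch constant `δ₀`. -/
structure IsWGM [MeasurableSpace X] (m : Measure X) (Δ₀ : Set X) (F : X → X)
    (p : X → ℕ) (J : X → ℝ) (CF β δ₀ : ℝ) : Prop where
  meas_Δ₀ : MeasurableSet Δ₀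
  pos : 0 < m Δ₀
  fin : m Δ₀ < ⊤
  mapsTo : MapsTo F Δ₀ Δ₀
  meas_F : Measurable F
  meas_p : Measurable p
  meas_J : Measurable J
  quasi : (m.restrict Δ₀).map F ≪ m.restrict Δ₀
  injOn : ∀ i, InjOn F (pElem Δ₀ p i)
  markov : ∀ i, 0 < m (pElem Δ₀ p i) →
    ∃ S : Set ℕ, (m.restrict Δ₀) ((F '' pElem Δ₀ p i \ ⋃ j ∈ S, pElem Δ₀ p j) ∪
      ((⋃ j ∈ S, pElem Δ₀ p j) \ F '' pElem Δ₀ p i)) = 0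
  separating : ∀ x ∈ Δ₀, ∀ y ∈ Δ₀, x ≠ y → ∃ n, p (F^[n] x) ≠ p (F^[n] y)
  generating : ∀ A : Set X, MeasurableSet A → A ⊆ Δ₀ →
    ∃ B : Set X, MeasurableSet[MeasurableSpace.generateFrom
        {C : Set X | ∃ w : List ℕ, C = pElemN Δ₀ F p w}] B ∧
      m ((A \ B) ∪ (B \ A)) = 0
  J_pos : ∀ x ∈ Δ₀, 0 < J x
  nonsing : ∀ i, ∀ A : Set X, A ⊆ pElem Δ₀ p i → MeasurableSet A →
    m (F '' A) = ∫⁻ a in A, ENNReal.ofReal (J a) ∂m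
  CF_pos : 0 < CF
  β_pos : 0 < β
  β_lt_one : β < 1
  gibbs : ∀ i, ∀ x ∈ pElem Δ₀ p i, ∀ y ∈ pElem Δ₀ p i,
    Real.log (J x / J y) ≤ CF * β ^ sepTime F p (F x) (F y)
  δ₀_pos : 0 < δ₀
  longBranch : ∀ i, 0 < m (pElem Δ₀ p i) → ENNReal.ofReal δ₀ ≤ m (F '' pElem Δ₀ p i)

/-- The induced map `f^R`. -/
def inducedF (f : M → M) (R : M → ℕ) : M → M := fun x => f^[R x] x

/-- `f^R : Δ₀ → Δ₀` is an induced weak Gibbs Markov map for `f`, with return time `R`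
constant on the elements of the partition indexed by `p`. -/
structure IsInducedWGM [MeasurableSpace M] (m : Measure M) (f : M → M) (Δ₀ : Set M)
    (R : M → ℕ) (p : M → ℕ) (J : M → ℝ) (CF β δ₀ : ℝ) : Prop where
  toIsWGM : IsWGM m Δ₀ (inducedF f R) p J CF β δ₀
  meas_R : Measurable R
  R_pos : ∀ x ∈ Δ₀, 0 < R x
  R_const : ∀ x ∈ Δ₀, ∀ y ∈ Δ₀, p x = p y → R x = R y

/-- Irreducibility of a (weak Gibbs Markov) map with respect to the partition. -/
def IrreducibleWGM [MeasurableSpace X] (m : Measure X) (Δ₀ : Set X) (F : X → X)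
    (p : X → ℕ) : Prop :=
  ∀ i j : ℕ, 0 < m (pElem Δ₀ p i) → 0 < m (pElem Δ₀ p j) →
    ∃ n : ℕ, 0 < m (pElem Δ₀ p i ∩ F^[n] ⁻¹' pElem Δ₀ p j)

/-- Aperiodicity of a (weak Gibbs Markov) map with respect to the partition. -/
def AperiodicWGM [MeasurableSpace X] (m : Measure X) (Δ₀ : Set X) (F : X → X)
    (p : X → ℕ) : Prop :=
  ∀ i j : ℕ, 0 < m (pElem Δ₀ p i) → 0 < m (pElem Δ₀ p j) →
    ∃ k₀ : ℕ, ∀ n ≥ k₀, 0 < m (pElem Δ₀ p i ∩ F^[n] ⁻¹' pElem Δ₀ p j)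

/-- The induced map `F = f^R` has a coprime block. -/
def HasCoprimeBlock [MeasurableSpace M] (m : Measure M) (F : M → M) (Δ₀ : Set M)
    (R : M → ℕ) (p : M → ℕ) : Prop :=
  ∃ N : ℕ, 2 ≤ N ∧ ∃ ι : Fin N → ℕ, ∃ r : Fin N → ℕ,
    (∀ i, 0 < m (pElem Δ₀ p (ι i))) ∧
    (∀ i, ∀ x ∈ pElem Δ₀ p (ι i), R x = r i) ∧
    Finset.univ.gcd r = 1 ∧
    ∀ i, m ((⋃ j, pElem Δ₀ p (ι j)) \ F '' pElem Δ₀ p (ι i)) = 0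

/-- The induced map `f^R` is expanding. -/
def ExpandingInduced [PseudoMetricSpace M] (f : M → M) (Δ₀ : Set M) (R : M → ℕ)
    (p : M → ℕ) : Prop :=
  ∃ C : ℝ, 0 < C ∧ ∃ β : ℝ, 0 < β ∧ β < 1 ∧
    ∀ i : ℕ, ∀ x ∈ pElem Δ₀ p i, ∀ y ∈ pElem Δ₀ p i,
      dist (inducedF f R x) (inducedF f R y) ≤ C * β ^ sepTime (inducedF f R) p x y ∧
      ∀ j ≤ R x, dist (f^[j] x) (f^[j] y) ≤ C * dist (inducedF f R x) (inducedF f R y)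

/-- The tower `Δ = {(x,ℓ) : x ∈ Δ₀, 0 ≤ ℓ < R x}`. -/
def towerSet (Δ₀ : Set M) (R : M → ℕ) : Set (M × ℕ) := {q | q.1 ∈ Δ₀ ∧ q.2 < R q.1}

/-- The `ℓ`-th level of the tower. -/
def towerLevel (Δ₀ : Set M) (R : M → ℕ) (ℓ : ℕ) : Set (M × ℕ) :=
  {q | q.1 ∈ Δ₀ ∧ q.2 = ℓ ∧ ℓ < R q.1}

/-- The tower map `T`. -/
def towerMap (f : M → M) (R : M → ℕ) : M × ℕ → M × ℕ :=
  fun q => if q.2 + 1 < R q.1 then (q.1, q.2 + 1) else (inducedF f R q.1, 0)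

/-- The reference measure on the tower, obtained extending `m` level by level. -/
def towerMeasure [MeasurableSpace M] (m : Measure M) (Δ₀ : Set M) (R : M → ℕ) :
    Measure (M × ℕ) :=
  Measure.sum fun ℓ : ℕ => (m.restrict (Δ₀ ∩ {x | ℓ < R x})).map (fun x => (x, ℓ))

/-- Index (partition element of `η` and level) of a point of the tower. -/
def towerIdx (p : M → ℕ) (q : M × ℕ) : ℕ × ℕ := (p q.1, q.2)

/-- The separation time extended to the tower. -/
def towerSep (f : M → M) (R : M → ℕ) (p : M → ℕ) (q r : M × ℕ) : ℕ :=
  if q.2 = r.2 then sepTime (inducedF f R) p q.1 r.1 else 0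

/-- The space `ℱ_β(D)` of `β`-locally Hölder functions w.r.t. a separation time `s`. -/
def MemF {α : Type*} (β : ℝ) (s : α → α → ℕ) (D : Set α) (φ : α → ℝ) : Prop :=
  ∃ C : ℝ, 0 < C ∧ ∀ x ∈ D, ∀ y ∈ D, |φ x - φ y| ≤ C * β ^ s x y

/-- The space `ℱ_β⁺(D)`: positive functions of `ℱ_β(D)` with ratios Hölder-controlled on
each partition element (points with the same index `idx`). -/
def MemFPlus {α ι : Type*} (β : ℝ) (s : α → α → ℕ) (idx : α → ι) (D : Set α)
    (φ : α → ℝ) : Prop :=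
  MemF β s D φ ∧ (∀ x ∈ D, 0 < φ x) ∧
    ∃ C : ℝ, 0 < C ∧ ∀ x ∈ D, ∀ y ∈ D, idx x = idx y →
      |φ x / φ y - 1| ≤ C * β ^ s x y

/-- Mixing invariant measure. -/
def MixingMeasure [MeasurableSpace X] (S : X → X) (ν : Measure X) : Prop :=
  ∀ A B : Set X, MeasurableSet A → MeasurableSet B →
    Tendsto (fun n : ℕ => ν (A ∩ S^[n] ⁻¹' B)) atTop (𝓝 (ν A * ν B))

/-- Exact invariant measure: the tail σ-algebra is trivial. -/
def ExactMeasure [MeasurableSpace X] (S : X → X) (ν : Measure X) : Prop :=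
  ∀ A : Set X, (∀ n : ℕ, ∃ B : Set X, MeasurableSet B ∧ A = S^[n] ⁻¹' B) →
    ν A = 0 ∨ ν A = 1

/-- Total variation distance between two measures. -/
def tvDist [MeasurableSpace X] (μ ν : Measure X) : ℝ :=
  ⨆ A : {s : Set X // MeasurableSet s}, |(μ A).toReal - (ν A).toReal|

/-- The candidate invariant measure on the tower built from the invariant measure `ν₀`
of the induced map: `ν = (Σ_j ν₀{R>j})⁻¹ Σ_j T^j_*(ν₀|{R>j})`. -/
def nuTower [MeasurableSpace M] (ν₀ : Measure M) (f : M → M) (R : M → ℕ) :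
    Measure (M × ℕ) :=
  (∑' j : ℕ, ν₀ {x | j < R x})⁻¹ •
    Measure.sum fun j : ℕ =>
      Measure.map ((towerMap f R)^[j])
        (Measure.map (fun x => (x, (0 : ℕ))) (ν₀.restrict {x | j < R x}))

/-- The first return time `R̂` to the base of the tower. -/
def hatR (f : M → M) (R : M → ℕ) (q : M × ℕ) : ℕ :=
  sInf {n | ((towerMap f R)^[n] q).2 = 0}

/-- The stopping times `τ_k` on `Δ × Δ`. -/
def tau (f : M → M) (R : M → ℕ) (n₀ : ℕ) : ℕ → (M × ℕ) × (M × ℕ) → ℕ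
  | 0, _ => 0
  | k + 1, q =>
      tau f R n₀ k q + n₀ +
        hatR f R ((towerMap f R)^[n₀ + tau f R n₀ k q]
          (if (k + 1) % 2 = 1 then q.1 else q.2))

/-- The simultaneous return time `S` to `Δ₀ × Δ₀`. -/
def simS (f : M → M) (R : M → ℕ) (n₀ : ℕ) (q : (M × ℕ) × (M × ℕ)) : ℕ :=
  sInf {t | ∃ i : ℕ, 2 ≤ i ∧ t = tau f R n₀ i q ∧
    ((towerMap f R)^[t] q.1).2 = 0 ∧ ((towerMap f R)^[t] q.2).2 = 0}

/-- The element of `⋁_{i<n} T⁻ⁱ η` containing the point `q` of the tower. -/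
def etaCellN (f : M → M) (R : M → ℕ) (p : M → ℕ) (Δ₀ : Set M) (n : ℕ)
    (q : M × ℕ) : Set (M × ℕ) :=
  {r | r ∈ towerSet Δ₀ R ∧
    ∀ i < n, towerIdx p ((towerMap f R)^[i] r) = towerIdx p ((towerMap f R)^[i] q)}

/-- The element of the partition `ξ_k` of `Δ × Δ` containing the point `q`. -/
def xiCell (f : M → M) (R : M → ℕ) (p : M → ℕ) (Δ₀ : Set M) (n₀ : ℕ) :
    ℕ → (M × ℕ) × (M × ℕ) → Set ((M × ℕ) × (M × ℕ))
  | 0, q => etaCellN f R p Δ₀ 1 q.1 ×ˢ etaCellN f R p Δ₀ 1 q.2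
  | k + 1, q =>
      if (k + 1) % 2 = 1 then
        etaCellN f R p Δ₀ (tau f R n₀ (k + 1) q) q.1 ×ˢ
          (Prod.snd '' xiCell f R p Δ₀ n₀ k q)
      else
        (Prod.fst '' xiCell f R p Δ₀ n₀ k q) ×ˢ
          etaCellN f R p Δ₀ (tau f R n₀ (k + 1) q) q.2

/-- The element of the refined tower partition `η_n = ⋁_{i<n} T⁻ⁱ η` determined by a
word `w` of indices (with `n = w.length`). -/
def towerElemN (f : M → M) (R : M → ℕ) (p : M → ℕ) (Δ₀ : Set M)
    (w : List (ℕ × ℕ)) : Set (M × ℕ) :=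
  towerSet Δ₀ R ∩
    {q | ∀ k : Fin w.length, towerIdx p ((towerMap f R)^[(k : ℕ)] q) = w.get k}

/-- A probability density on the tower lying in `ℱ_β⁺(Δ)` with ratio constant `Cφ`. -/
def GoodDensity [MeasurableSpace M] (m : Measure M) (f : M → M) (Δ₀ : Set M)
    (R : M → ℕ) (p : M → ℕ) (β : ℝ) (φ : M × ℕ → ℝ) (Cφ : ℝ) : Prop :=
  IsProbabilityMeasure ((towerMeasure m Δ₀ R).withDensity fun q => ENNReal.ofReal (φ q)) ∧
  MemF β (towerSep f R p) (towerSet Δ₀ R) φ ∧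
  (∀ q ∈ towerSet Δ₀ R, 0 < φ q) ∧ 0 < Cφ ∧
  ∀ q ∈ towerSet Δ₀ R, ∀ r ∈ towerSet Δ₀ R, towerIdx p q = towerIdx p r →
    |φ q / φ r - 1| ≤ Cφ * β ^ towerSep f R p q r

/-- The product measure `P = λ₁ × λ₂` on `Δ × Δ`, where `λᵢ = φᵢ · mΔ`. -/
def prodP [MeasurableSpace M] (m : Measure M) (Δ₀ : Set M) (R : M → ℕ)
    [SFinite (towerMeasure m Δ₀ R)] (φ₁ φ₂ : M × ℕ → ℝ) :
    Measure ((M × ℕ) × (M × ℕ)) :=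
  ((towerMeasure m Δ₀ R).prod (towerMeasure m Δ₀ R)).withDensity
    (fun r => ENNReal.ofReal (φ₁ r.1 * φ₂ r.2))

end WGMPaper

namespace WGMPaper

instance {M : Type*} [MeasurableSpace M] (m : MeasureTheory.Measure M) [MeasureTheory.SFinite m]
    (Δ₀ : Set M) (R : M → ℕ) : MeasureTheory.SFinite (towerMeasure m Δ₀ R) := by
  unfold towerMeasure; infer_instance

end WGMPaper

namespace WGMPaper

set_option linter.unusedSectionVars false
open scoped ENNReal
section AUX
variable {M : Type*} [MeasurableSpace M]

/-- product Jacobian of `i` steps of `F` -/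
def JProd (F : M → M) (J : M → ℝ) (i : ℕ) (x : M) : ℝ :=
  ∏ t ∈ Finset.range i, J (F^[t] x)


lemma JProd_succ (F : M → M) (J : M → ℝ) (j : ℕ) (x : M) :
    JProd F J (j+1) x = JProd F J j x * J (F^[j] x) := Finset.prod_range_succ _ _

lemma JProd_zero (F : M → M) (J : M → ℝ) (x : M) : JProd F J 0 x = 1 := rfl

/-- single-step change of variables for the induced map -/
lemma lemS (m : Measure M) (Δ₀ : Set M) (F : M → M) (p : M → ℕ) (J : M → ℝ)
    (hΔ : MeasurableSet Δ₀) (hfin : m Δ₀ < ⊤) (hF : Measurable F) (hJ : Measurable J)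
    (hmapsTo : MapsTo F Δ₀ Δ₀)
    (nonsing : ∀ i, ∀ A : Set M, A ⊆ pElem Δ₀ p i → MeasurableSet A →
      m (F '' A) = ∫⁻ a in A, ENNReal.ofReal (J a) ∂m)
    {w : ℕ} {A : Set M} (hA : MeasurableSet A) (hApE : A ⊆ pElem Δ₀ p w) :
    ∃ E : Set M, MeasurableSet E ∧ E ⊆ Δ₀ ∧ F '' A ⊆ E ∧
      (∀ t : Set M, MeasurableSet t → m (E ∩ t) = m (F '' A ∩ t)) ∧
      ∀ v : M → ℝ≥0∞, Measurable v →
        Measure.map F ((m.restrict A).withDensity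
            (fun a => v (F a) * ENNReal.ofReal (J a)))
          = (m.restrict E).withDensity v := by
  classical
  set m₀ := m.restrict Δ₀ with hm₀def
  have hm₀ : ∀ X : Set M, X ⊆ Δ₀ → m₀ X = m X := by
    intro X hX
    rw [hm₀def, Measure.restrict_apply' hΔ, inter_eq_self_of_subset_left hX]
  have hApΔ : A ⊆ Δ₀ := fun x hx => (hApE hx).1
  have himΔ : F '' A ⊆ Δ₀ := by
    rintro _ ⟨x, hx, rfl⟩; exact hmapsTo (hApΔ hx)
  have hne : m₀ (F '' A) ≠ ⊤ := by
    have : m₀ (F '' A) ≤ m Δ₀ := by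
      rw [hm₀def]
      calc m.restrict Δ₀ (F '' A) ≤ m.restrict Δ₀ univ := measure_mono (subset_univ _)
      _ = m Δ₀ := by rw [Measure.restrict_apply_univ]
    exact ne_top_of_le_ne_top hfin.ne this
  refine ⟨toMeasurable m₀ (F '' A) ∩ Δ₀,
    (measurableSet_toMeasurable _ _).inter hΔ,
    inter_subset_right, subset_inter (subset_toMeasurable _ _) himΔ, ?_, ?_⟩
  · intro t ht
    have h1 : toMeasurable m₀ (F '' A) ∩ Δ₀ ∩ t ⊆ Δ₀ :=
      fun x hx => hx.1.2
    rw [← hm₀ _ h1, ← hm₀ _ (fun x hx => himΔ hx.1)]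
    have h2 : toMeasurable m₀ (F '' A) ∩ Δ₀ ∩ t
        = toMeasurable m₀ (F '' A) ∩ (Δ₀ ∩ t) := by
      rw [inter_assoc]
    rw [h2, Measure.measure_toMeasurable_inter (hΔ.inter ht) hne]
    congr 1
    rw [← inter_assoc, inter_eq_self_of_subset_left himΔ]
  · -- first the pure identity
    have hκ : Measure.map F ((m.restrict A).withDensity
        (fun a => ENNReal.ofReal (J a))) = m.restrict (toMeasurable m₀ (F '' A) ∩ Δ₀) := by
      ext t ht
      rw [Measure.map_apply hF ht, withDensity_apply _ (hF ht),
        Measure.restrict_restrict (hF ht), Measure.restrict_apply ht]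
      have h3 : F ⁻¹' t ∩ A = A ∩ F ⁻¹' t := inter_comm _ _
      rw [h3, ← nonsing w (A ∩ F ⁻¹' t) (fun x hx => hApE hx.1) (hA.inter (hF ht))]
      rw [Set.image_inter_preimage]
      -- goal : m (F '' A ∩ t) = m (t ∩ (toMeasurable m₀ (F''A) ∩ Δ₀))
      have h4 : t ∩ (toMeasurable m₀ (F '' A) ∩ Δ₀)
          = toMeasurable m₀ (F '' A) ∩ (Δ₀ ∩ t) := by
        ext x; constructor
        · rintro ⟨h, h', h''⟩; exact ⟨h', h'', h⟩
        · rintro ⟨h, h', h''⟩; exact ⟨h'', h, h'⟩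
      have h6 : m (toMeasurable m₀ (F '' A) ∩ (Δ₀ ∩ t))
          = m₀ (toMeasurable m₀ (F '' A) ∩ (Δ₀ ∩ t)) :=
        (hm₀ _ (fun x hx => hx.2.1)).symm
      have h5 : F '' A ∩ (Δ₀ ∩ t) = F '' A ∩ t := by
        rw [← inter_assoc, inter_eq_self_of_subset_left himΔ]
      rw [h4, h6, Measure.measure_toMeasurable_inter (hΔ.inter ht) hne, h5]
      exact (hm₀ _ (fun x hx => himΔ hx.1)).symm
    intro v hv
    ext t ht
    have hvind : Measurable (t.indicator v) := hv.indicator ht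
    rw [Measure.map_apply hF ht, withDensity_apply _ (hF ht),
      withDensity_apply _ ht]
    have step1 : ∫⁻ a in F ⁻¹' t, v (F a) * ENNReal.ofReal (J a) ∂(m.restrict A)
        = ∫⁻ a, (F ⁻¹' t).indicator (fun a => v (F a) * ENNReal.ofReal (J a)) a
            ∂(m.restrict A) := (lintegral_indicator (hF ht) _).symm
    have step2 : ∀ a, (F ⁻¹' t).indicator (fun a => v (F a) * ENNReal.ofReal (J a)) a
        = ((fun a => ENNReal.ofReal (J a)) * (fun a => t.indicator v (F a))) a := by
      intro a
      by_cases h : F a ∈ t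
      · simp [Set.indicator_of_mem, h, mul_comm]
      · simp [Set.indicator_of_notMem, h]
    have hwd := lintegral_withDensity_eq_lintegral_mul (m.restrict A)
        (f := fun a => ENNReal.ofReal (J a)) (ENNReal.measurable_ofReal.comp hJ)
        (g := fun a => t.indicator v (F a)) (hvind.comp hF)
    rw [step1, lintegral_congr step2, ← hwd]
    rw [← lintegral_map hvind hF, hκ, lintegral_indicator ht]


/-- one inductive step of the iterated change of variables -/
lemma STEP (m : Measure M) (Δ₀ : Set M) (F : M → M) (p : M → ℕ) (J : M → ℝ)
    (hΔ : MeasurableSet Δ₀) (hfin : m Δ₀ < ⊤) (hF : Measurable F) (hJ : Measurable J)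
    (hmapsTo : MapsTo F Δ₀ Δ₀)
    (nonsing : ∀ i, ∀ A : Set M, A ⊆ pElem Δ₀ p i → MeasurableSet A →
      m (F '' A) = ∫⁻ a in A, ENNReal.ofReal (J a) ∂m)
    {Z A S : Set M} {j w : ℕ}
    (hZ : MeasurableSet Z) (hA : MeasurableSet A) (hApE : A ⊆ pElem Δ₀ p w)
    (hS : MeasurableSet S) (hSsub : ∀ x ∈ Z, F^[j+1] x ∈ S)
    (hFZ : ∀ x ∈ Z, F^[j] x ∈ A)
    (hid : ∀ v : M → ℝ≥0∞, Measurable v →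
      Measure.map (F^[j]) ((m.restrict Z).withDensity
          (fun x => ENNReal.ofReal (JProd F J j x) * v (F^[j] x)))
        = (m.restrict A).withDensity v)
    (hZJ : ∀ x ∈ Z, ∀ t, 0 < J (F^[t] x)) :
    ∃ A' : Set M, MeasurableSet A' ∧ A' ⊆ S ∧ A' ⊆ Δ₀ ∧ (∀ x ∈ Z, F^[j+1] x ∈ A') ∧
      ∀ v : M → ℝ≥0∞, Measurable v →
        Measure.map (F^[j+1]) ((m.restrict Z).withDensity
            (fun x => ENNReal.ofReal (JProd F J (j+1) x) * v (F^[j+1] x)))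
          = (m.restrict A').withDensity v := by
  classical
  -- the part of `A` that does not enter `S` is null
  have hpure := hid 1 measurable_one
  have hpure' : (fun x => ENNReal.ofReal (JProd F J j x) * (1 : M → ℝ≥0∞) (F^[j] x))
      = fun x => ENNReal.ofReal (JProd F J j x) := by
    funext x; simp
  rw [hpure', withDensity_one] at hpure
  have hnull : m (A \ F ⁻¹' S) = 0 := by
    have e1 : m (A \ F ⁻¹' S) = (m.restrict A) ((F ⁻¹' S)ᶜ) := by
      rw [Measure.restrict_apply (hF hS).compl, Set.diff_eq_compl_inter]
    rw [e1, ← hpure, Measure.map_apply (hF.iterate j) (hF hS).compl,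
      withDensity_apply _ ((hF.iterate j) (hF hS).compl),
      Measure.restrict_restrict ((hF.iterate j) (hF hS).compl)]
    have e2 : F^[j] ⁻¹' (F ⁻¹' S)ᶜ ∩ Z = ∅ := by
      ext x
      simp only [Set.mem_inter_iff, Set.mem_preimage, Set.mem_compl_iff,
        Set.mem_empty_iff_false, iff_false, not_and]
      intro hx hxZ
      exact hx (by rw [← Function.iterate_succ_apply' F j x]; exact hSsub x hxZ)
    rw [e2, Measure.restrict_empty, lintegral_zero_measure]
  set A'' := A ∩ F ⁻¹' S with hA''def
  have hA''meas : MeasurableSet A'' := hA.inter (hF hS)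
  have hresAA : m.restrict A = m.restrict A'' := by
    apply Measure.restrict_congr_set
    rw [MeasureTheory.ae_eq_set]
    constructor
    · rw [Set.diff_self_inter]; exact hnull
    · rw [Set.diff_eq_empty.2 Set.inter_subset_left]; exact measure_empty
  obtain ⟨E, hEmeas, hEΔ, hFAE, htrace, hEid⟩ :=
    lemS m Δ₀ F p J hΔ hfin hF hJ hmapsTo nonsing hA''meas
      (fun x hx => hApE hx.1)
  have hFA''S : F '' A'' ⊆ S := by rintro _ ⟨x, hx, rfl⟩; exact hx.2
  have hresE : m.restrict E = m.restrict (E ∩ S) := by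
    apply Measure.restrict_congr_set
    rw [MeasureTheory.ae_eq_set]
    constructor
    · rw [Set.diff_self_inter, Set.diff_eq, htrace Sᶜ hS.compl]
      have : F '' A'' ∩ Sᶜ = ∅ := by
        apply Set.eq_empty_of_forall_notMem
        rintro x ⟨hx1, hx2⟩; exact hx2 (hFA''S hx1)
      rw [this]; exact measure_empty
    · rw [Set.diff_eq_empty.2 Set.inter_subset_left]; exact measure_empty
  refine ⟨E ∩ S, hEmeas.inter hS, Set.inter_subset_right,
    Set.inter_subset_left.trans hEΔ, ?_, ?_⟩
  · intro x hx
    have h1 : F^[j] x ∈ A'' := ⟨hFZ x hx, by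
      rw [Set.mem_preimage, ← Function.iterate_succ_apply' F j x]
      exact hSsub x hx⟩
    refine ⟨?_, hSsub x hx⟩
    have : F^[j+1] x ∈ F '' A'' := by
      rw [Function.iterate_succ_apply' F j x]
      exact ⟨F^[j] x, h1, rfl⟩
    exact hFAE this
  · intro v hv
    have hv' : Measurable (fun a => v (F a) * ENNReal.ofReal (J a)) :=
      (hv.comp hF).mul (ENNReal.measurable_ofReal.comp hJ)
    have hdens : (fun x => ENNReal.ofReal (JProd F J (j+1) x) * v (F^[j+1] x))
        =ᵐ[m.restrict Z] (fun x => ENNReal.ofReal (JProd F J j x) *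
          ((fun a => v (F a) * ENNReal.ofReal (J a)) (F^[j] x))) := by
      rw [Filter.EventuallyEq, ae_restrict_iff' hZ]
      apply Filter.Eventually.of_forall
      intro x hx
      have hJge : 0 ≤ JProd F J j x :=
        le_of_lt (Finset.prod_pos (fun t _ => hZJ x hx t))
      rw [JProd_succ, ENNReal.ofReal_mul hJge, Function.iterate_succ_apply' F j x]
      ring
    calc Measure.map (F^[j+1]) ((m.restrict Z).withDensity
            (fun x => ENNReal.ofReal (JProd F J (j+1) x) * v (F^[j+1] x)))
        = Measure.map F (Measure.map (F^[j]) ((m.restrict Z).withDensity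
            (fun x => ENNReal.ofReal (JProd F J j x) *
              ((fun a => v (F a) * ENNReal.ofReal (J a)) (F^[j] x))))) := by
          rw [withDensity_congr_ae hdens, Function.iterate_succ' F j,
            ← Measure.map_map hF (hF.iterate j)]
      _ = Measure.map F ((m.restrict A'').withDensity
            (fun a => v (F a) * ENNReal.ofReal (J a))) := by
          rw [hid _ hv', hresAA]
      _ = (m.restrict E).withDensity v := hEid v hv
      _ = (m.restrict (E ∩ S)).withDensity v := by rw [hresE]


lemma measurableSet_word {k : ℕ} (S : Set (Fin k → ℕ)) : MeasurableSet S := by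
  have hsing : ∀ w : Fin k → ℕ, MeasurableSet ({w} : Set (Fin k → ℕ)) := by
    intro w
    have : ({w} : Set (Fin k → ℕ)) = ⋂ t : Fin k, (fun g : Fin k → ℕ => g t) ⁻¹' {w t} := by
      ext g
      simp only [Set.mem_singleton_iff, Set.mem_iInter, Set.mem_preimage]
      constructor
      · rintro rfl t; rfl
      · intro h; funext t; exact h t
    rw [this]
    exact MeasurableSet.iInter (fun t => (measurable_pi_apply t) (measurableSet_singleton _))
  have : S = ⋃ w ∈ S, ({w} : Set (Fin k → ℕ)) := by simp
  rw [this]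
  exact MeasurableSet.biUnion (Set.to_countable S) (fun w _ => hsing w)

/-- a function which is uniformly approximated, on a set `D`, by functions constant on
itinerary cylinders, agrees on `D` with a measurable function -/
lemma exists_measurable_agree (F : M → M) (p : M → ℕ) (hF : Measurable F)
    (hp : Measurable p) (D : Set M) (φ : M → ℝ) (ε : ℕ → ℝ)
    (hε : Filter.Tendsto ε Filter.atTop (nhds 0))
    (hφ : ∀ k : ℕ, ∀ a ∈ D, ∀ b ∈ D, (∀ t, t < k → p (F^[t] a) = p (F^[t] b)) →
      |φ a - φ b| ≤ ε k)
    (hpos : ∀ a ∈ D, 0 ≤ φ a) :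
    ∃ ψ : M → ℝ, Measurable ψ ∧ ∀ a ∈ D, ψ a = φ a := by
  classical
  set it : (k : ℕ) → M → (Fin k → ℕ) := fun k y t => p (F^[(t : ℕ)] y) with hit
  have hitmeas : ∀ k, Measurable (it k) := by
    intro k
    apply measurable_pi_lambda
    intro t
    exact hp.comp (hF.iterate (t : ℕ))
  set W : (k : ℕ) → (Fin k → ℕ) → ℝ := fun k w =>
    if h : ∃ a, a ∈ D ∧ it k a = w then φ h.choose else 0 with hW
  set φk : ℕ → M → ℝ := fun k y => W k (it k y) with hφk
  have hWmeas : ∀ k, Measurable (W k) := fun k => fun s _ => measurableSet_word _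
  have hφkmeas : ∀ k, Measurable (φk k) := fun k => (hWmeas k).comp (hitmeas k)
  have hφkapprox : ∀ k, ∀ a ∈ D, |φk k a - φ a| ≤ ε k := by
    intro k a ha
    have hex : ∃ b, b ∈ D ∧ it k b = it k a := ⟨a, ha, rfl⟩
    have : φk k a = φ hex.choose := by
      rw [hφk]; simp only [hW]; rw [dif_pos hex]
    rw [this]
    obtain ⟨hbD, hba⟩ := hex.choose_spec
    apply hφ k _ hbD a ha
    intro t ht
    have := congrFun hba (⟨t, ht⟩ : Fin k)
    exact this
  have hφknonneg : ∀ k y, 0 ≤ φk k y := by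
    intro k y
    rw [hφk]; simp only [hW]
    split
    · next h => exact hpos _ h.choose_spec.1
    · exact le_rfl
  refine ⟨fun y => (Filter.liminf (fun k => ENNReal.ofReal (φk k y)) Filter.atTop).toReal,
    ?_, ?_⟩
  · apply Measurable.ennreal_toReal
    apply Measurable.liminf
    intro k
    exact ENNReal.measurable_ofReal.comp (hφkmeas k)
  · intro a ha
    have htend : Filter.Tendsto (fun k => φk k a) Filter.atTop (nhds (φ a)) := by
      have h0 : Filter.Tendsto (fun k => φk k a - φ a) Filter.atTop (nhds 0) := by
        apply squeeze_zero_norm (fun k => ?_) hε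
        · rw [Real.norm_eq_abs]; exact hφkapprox k a ha
      have := h0.add_const (φ a)
      simpa using this
    have htend2 : Filter.Tendsto (fun k => ENNReal.ofReal (φk k a)) Filter.atTop
        (nhds (ENNReal.ofReal (φ a))) := ENNReal.tendsto_ofReal htend
    show (Filter.liminf (fun k => ENNReal.ofReal (φk k a)) Filter.atTop).toReal = φ a
    rw [htend2.liminf_eq, ENNReal.toReal_ofReal (hpos a ha)]


lemma ccount_succ (P : ℕ → Prop) [DecidablePred P] (k : ℕ) :
    ((Finset.Icc 1 (k+1)).filter P).card
      = ((Finset.Icc 1 k).filter P).card + if P (k+1) then 1 else 0 := by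
  have h : Finset.Icc 1 (k+1) = insert (k+1) (Finset.Icc 1 k) := by
    ext x; simp only [Finset.mem_Icc, Finset.mem_insert]; omega
  rw [h, Finset.filter_insert]
  split
  · rw [Finset.card_insert_of_notMem]
    · simp only [Finset.mem_filter, Finset.mem_Icc]
      intro hc
      omega
  · simp

lemma nat_slow_surj (c : ℕ → ℕ) (h0 : c 0 = 0)
    (hstep : ∀ k, c (k+1) = c k ∨ c (k+1) = c k + 1) :
    ∀ N t, t ≤ c N → ∃ k, k ≤ N ∧ c k = t := by
  intro N
  induction N with
  | zero => intro t ht; exact ⟨0, le_rfl, by omega⟩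
  | succ N ih =>
    intro t ht
    by_cases h : t ≤ c N
    · obtain ⟨k, hk, hck⟩ := ih t h
      exact ⟨k, hk.trans (Nat.le_succ N), hck⟩
    · refine ⟨N+1, le_rfl, ?_⟩
      rcases hstep N with h1 | h1 <;> omega

lemma geom_le {β : ℝ} (h0 : 0 ≤ β) (h1 : β < 1) (i : ℕ) :
    ∑ t ∈ Finset.range i, β ^ t ≤ 1/(1-β) := by
  have hb : (0:ℝ) < 1 - β := by linarith
  rw [geom_sum_eq (ne_of_lt h1) i]
  have he : (β^i - 1)/(β - 1) = (1 - β^i)/(1 - β) := by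
    rw [div_eq_div_iff (by linarith) (by linarith)]; ring
  rw [he]
  have h2 : 1 - β^i ≤ 1 := by nlinarith [pow_nonneg h0 i]
  gcongr

lemma exp_sub_one_le_mul (t : ℝ) : Real.exp t - 1 ≤ t * Real.exp t := by
  have h := Real.add_one_le_exp (-t)
  have hpos := Real.exp_pos t
  have h2 : (-t+1) * Real.exp t ≤ Real.exp (-t) * Real.exp t :=
    mul_le_mul_of_nonneg_right h hpos.le
  rw [← Real.exp_add] at h2
  have h3 : (-t) + t = 0 := by ring
  rw [h3, Real.exp_zero] at h2
  nlinarith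

/-- number of visits of the orbit of `q` to the base, up to time `k` -/
def vis (f : M → M) (R : M → ℕ) (q : M × ℕ) (k : ℕ) : ℕ :=
  ((Finset.Icc 1 k).filter (fun j => ((towerMap f R)^[j] q).2 = 0)).card

lemma vis_zero (f : M → M) (R : M → ℕ) (q : M × ℕ) : vis f R q 0 = 0 := by
  simp [vis]

lemma vis_succ (f : M → M) (R : M → ℕ) (q : M × ℕ) (k : ℕ) :
    vis f R q (k+1) = vis f R q k
      + if ((towerMap f R)^[k+1] q).2 = 0 then 1 else 0 :=
  ccount_succ _ k

lemma vis_step (f : M → M) (R : M → ℕ) (q : M × ℕ) (k : ℕ) :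
    vis f R q (k+1) = vis f R q k ∨ vis f R q (k+1) = vis f R q k + 1 := by
  rw [vis_succ]; split <;> simp

/-- the orbit of a tower point: first coordinates are the `F`-orbit sampled at visits -/
lemma tower_orbit {Δ₀ : Set M} {f : M → M} {R : M → ℕ}
    (hmapsTo : MapsTo (inducedF f R) Δ₀ Δ₀) (hRpos : ∀ x ∈ Δ₀, 0 < R x)
    {q : M × ℕ} (hq : q ∈ towerSet Δ₀ R) :
    ∀ k, ((towerMap f R)^[k] q).1 = (inducedF f R)^[vis f R q k] q.1 ∧
      (towerMap f R)^[k] q ∈ towerSet Δ₀ R := by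
  intro k
  induction k with
  | zero => exact ⟨by simp [vis_zero], hq⟩
  | succ k ih =>
    obtain ⟨h1, h2⟩ := ih
    rw [Function.iterate_succ_apply' (towerMap f R) k q]
    set z := (towerMap f R)^[k] q with hz
    by_cases hbr : z.2 + 1 < R z.1
    · have hT : towerMap f R z = (z.1, z.2 + 1) := by
        rw [towerMap, if_pos hbr]
      have hv : vis f R q (k+1) = vis f R q k := by
        rw [vis_succ, if_neg, add_zero]
        rw [Function.iterate_succ_apply' (towerMap f R) k q, ← hz, hT]
        simp
      rw [hT, hv]
      exact ⟨by rw [← h1], ⟨h2.1, hbr⟩⟩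
    · have hT : towerMap f R z = (inducedF f R z.1, 0) := by
        rw [towerMap, if_neg hbr]
      have hv : vis f R q (k+1) = vis f R q k + 1 := by
        rw [vis_succ, if_pos]
        rw [Function.iterate_succ_apply' (towerMap f R) k q, ← hz, hT]
      rw [hT, hv]
      constructor
      · show inducedF f R z.1 = (inducedF f R)^[vis f R q k + 1] q.1
        rw [Function.iterate_succ_apply' (inducedF f R) _ q.1, ← h1]
      · exact ⟨hmapsTo h2.1, hRpos _ (hmapsTo h2.1)⟩

/-- points with the same itinerary as `q` (sampled at visits) shadow the orbit of `q` -/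
lemma cell_orbit {Δ₀ : Set M} {f : M → M} {R : M → ℕ} {p : M → ℕ}
    (hmapsTo : MapsTo (inducedF f R) Δ₀ Δ₀) (hRpos : ∀ x ∈ Δ₀, 0 < R x)
    (hRconst : ∀ x ∈ Δ₀, ∀ y ∈ Δ₀, p x = p y → R x = R y)
    {q : M × ℕ} (hq : q ∈ towerSet Δ₀ R) {n : ℕ} {x : M} (hxΔ : x ∈ Δ₀)
    (hxit : ∀ k, k < n → p ((inducedF f R)^[vis f R q k] x)
      = p (((towerMap f R)^[k] q).1)) :
    ∀ k, k ≤ n → (towerMap f R)^[k] (x, q.2)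
      = ((inducedF f R)^[vis f R q k] x, ((towerMap f R)^[k] q).2) := by
  intro k
  induction k with
  | zero => intro _; simp [vis_zero]
  | succ k ih =>
    intro hk
    have ihk := ih (le_of_lt (Nat.lt_of_succ_le hk))
    have hkn : k < n := Nat.lt_of_succ_le hk
    rw [Function.iterate_succ_apply' (towerMap f R) k (x, q.2), ihk]
    have hq1 := (tower_orbit hmapsTo hRpos hq k).1
    have hxmem : (inducedF f R)^[vis f R q k] x ∈ Δ₀ := by
      clear ihk hxit
      induction (vis f R q k) with
      | zero => exact hxΔ
      | succ t iht =>
        rw [Function.iterate_succ_apply' (inducedF f R) t x]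
        exact hmapsTo iht
    have hqmem : ((towerMap f R)^[k] q).1 ∈ Δ₀ := (tower_orbit hmapsTo hRpos hq k).2.1
    have hReq : R ((inducedF f R)^[vis f R q k] x) = R (((towerMap f R)^[k] q).1) :=
      hRconst _ hxmem _ hqmem (hxit k hkn)
    have hqstep : (towerMap f R)^[k+1] q = towerMap f R (((towerMap f R)^[k] q).1,
        ((towerMap f R)^[k] q).2) := by
      rw [Function.iterate_succ_apply' (towerMap f R) k q]
    by_cases hbr : ((towerMap f R)^[k] q).2 + 1 < R (((towerMap f R)^[k] q).1)
    · have hT : towerMap f R ((inducedF f R)^[vis f R q k] x, ((towerMap f R)^[k] q).2)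
          = ((inducedF f R)^[vis f R q k] x, ((towerMap f R)^[k] q).2 + 1) := by
        rw [towerMap, if_pos]; rw [hReq]; exact hbr
      have hTq : (towerMap f R)^[k+1] q = (((towerMap f R)^[k] q).1,
          ((towerMap f R)^[k] q).2 + 1) := by
        rw [hqstep, towerMap, if_pos hbr]
      have hv : vis f R q (k+1) = vis f R q k := by
        rw [vis_succ, if_neg, add_zero]
        rw [hTq]; simp
      rw [hT, hv, hTq]
    · have hT : towerMap f R ((inducedF f R)^[vis f R q k] x, ((towerMap f R)^[k] q).2)
          = (inducedF f R ((inducedF f R)^[vis f R q k] x), 0) := by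
        rw [towerMap, if_neg]; rw [hReq]; exact hbr
      have hTq : (towerMap f R)^[k+1] q = (inducedF f R (((towerMap f R)^[k] q).1), 0) := by
        rw [hqstep, towerMap, if_neg hbr]
      have hv : vis f R q (k+1) = vis f R q k + 1 := by
        rw [vis_succ, if_pos]; rw [hTq]
      rw [hT, hv, hTq]
      rw [Function.iterate_succ_apply' (inducedF f R) (vis f R q k) x]

/-- membership in the cell gives the itinerary description -/
lemma cell_struct {Δ₀ : Set M} {f : M → M} {R : M → ℕ} {p : M → ℕ}
    (hmapsTo : MapsTo (inducedF f R) Δ₀ Δ₀) (hRpos : ∀ x ∈ Δ₀, 0 < R x)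
    (hRconst : ∀ x ∈ Δ₀, ∀ y ∈ Δ₀, p x = p y → R x = R y)
    {q : M × ℕ} (hq : q ∈ towerSet Δ₀ R) {n : ℕ} (hn : 1 ≤ n) {r : M × ℕ}
    (hr : r ∈ etaCellN f R p Δ₀ n q) :
    r.2 = q.2 ∧ r.1 ∈ Δ₀ ∧ ∀ k, k < n → p ((inducedF f R)^[vis f R q k] r.1)
      = p (((towerMap f R)^[k] q).1) := by
  obtain ⟨hrT, hridx⟩ := hr
  have hr2 : r.2 = q.2 := by
    have h0 := hridx 0 (by omega)
    simp only [Function.iterate_zero_apply, towerIdx, Prod.mk.injEq] at h0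
    exact h0.2
  have hr1 : r.1 ∈ Δ₀ := hrT.1
  have main : ∀ k, k ≤ n → ((towerMap f R)^[k] r).1 = (inducedF f R)^[vis f R q k] r.1
      ∧ ((towerMap f R)^[k] r).2 = ((towerMap f R)^[k] q).2 := by
    intro k
    induction k with
    | zero =>
      intro _
      exact ⟨by simp [vis_zero], by simpa using hr2⟩
    | succ k ih =>
      intro hk
      obtain ⟨ih1, ih2⟩ := ih (le_of_lt (Nat.lt_of_succ_le hk))
      have hkn : k < n := Nat.lt_of_succ_le hk
      have hpk : p (((towerMap f R)^[k] r).1) = p (((towerMap f R)^[k] q).1) := by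
        have h := hridx k hkn
        simp only [towerIdx, Prod.mk.injEq] at h
        exact h.1
      have hxmem : ((towerMap f R)^[k] r).1 ∈ Δ₀ := by
        have := (tower_orbit hmapsTo hRpos hrT k).2.1
        exact this
      have hqmem : ((towerMap f R)^[k] q).1 ∈ Δ₀ := (tower_orbit hmapsTo hRpos hq k).2.1
      have hReq : R (((towerMap f R)^[k] r).1) = R (((towerMap f R)^[k] q).1) :=
        hRconst _ hxmem _ hqmem hpk
      have hrstep : (towerMap f R)^[k+1] r = towerMap f R ((towerMap f R)^[k] r) := by
        rw [Function.iterate_succ_apply' (towerMap f R) k r]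
      have hqstep : (towerMap f R)^[k+1] q = towerMap f R ((towerMap f R)^[k] q) := by
        rw [Function.iterate_succ_apply' (towerMap f R) k q]
      by_cases hbr : ((towerMap f R)^[k] q).2 + 1 < R (((towerMap f R)^[k] q).1)
      · have hbr' : ((towerMap f R)^[k] r).2 + 1 < R (((towerMap f R)^[k] r).1) := by
          rw [hReq, ih2]; exact hbr
        have hTr : towerMap f R ((towerMap f R)^[k] r)
            = (((towerMap f R)^[k] r).1, ((towerMap f R)^[k] r).2 + 1) := by
          rw [towerMap, if_pos hbr']
        have hTq : towerMap f R ((towerMap f R)^[k] q)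
            = (((towerMap f R)^[k] q).1, ((towerMap f R)^[k] q).2 + 1) := by
          rw [towerMap, if_pos hbr]
        have hv : vis f R q (k+1) = vis f R q k := by
          rw [vis_succ, if_neg, add_zero]
          rw [hqstep, hTq]; simp
        rw [hrstep, hqstep, hTr, hTq, hv]
        exact ⟨ih1, by rw [ih2]⟩
      · have hbr' : ¬ (((towerMap f R)^[k] r).2 + 1 < R (((towerMap f R)^[k] r).1)) := by
          rw [hReq, ih2]; exact hbr
        have hTr : towerMap f R ((towerMap f R)^[k] r)
            = (inducedF f R (((towerMap f R)^[k] r).1), 0) := by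
          rw [towerMap, if_neg hbr']
        have hTq : towerMap f R ((towerMap f R)^[k] q)
            = (inducedF f R (((towerMap f R)^[k] q).1), 0) := by
          rw [towerMap, if_neg hbr]
        have hv : vis f R q (k+1) = vis f R q k + 1 := by
          rw [vis_succ, if_pos]; rw [hqstep, hTq]
        rw [hrstep, hqstep, hTr, hTq, hv]
        constructor
        · rw [ih1, Function.iterate_succ_apply' (inducedF f R) (vis f R q k) r.1]
        · rfl
  refine ⟨hr2, hr1, ?_⟩
  intro k hkn
  have h1 := (main k (le_of_lt hkn)).1
  have h2 := hridx k hkn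
  simp only [towerIdx, Prod.mk.injEq] at h2
  rw [← h1]
  exact h2.1

lemma sepTime_ge {Δ₀ : Set M} {F : M → M} {p : M → ℕ}
    (hsep : ∀ x ∈ Δ₀, ∀ y ∈ Δ₀, x ≠ y → ∃ n, p (F^[n] x) ≠ p (F^[n] y))
    {a b : M} (ha : a ∈ Δ₀) (hb : b ∈ Δ₀) (hab : a ≠ b) {N : ℕ}
    (h : ∀ t, t < N → p (F^[t] a) = p (F^[t] b)) : N ≤ sepTime F p a b := by
  obtain ⟨t₀, ht₀⟩ := hsep a ha b hb hab
  apply le_csInf ⟨t₀, ht₀⟩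
  intro s hs
  by_contra hcon
  exact hs (h s (by omega))

/-- Gibbs distortion estimate along `i` steps for points agreeing up to time `N` -/
lemma JD {Δ₀ : Set M} {F : M → M} {p : M → ℕ} {J : M → ℝ} {CF β : ℝ}
    (hmapsTo : MapsTo F Δ₀ Δ₀)
    (hJpos : ∀ x ∈ Δ₀, 0 < J x)
    (hinj : ∀ i, InjOn F (pElem Δ₀ p i))
    (hsep : ∀ x ∈ Δ₀, ∀ y ∈ Δ₀, x ≠ y → ∃ n, p (F^[n] x) ≠ p (F^[n] y))
    (hgibbs : ∀ i, ∀ x ∈ pElem Δ₀ p i, ∀ y ∈ pElem Δ₀ p i,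
      Real.log (J x / J y) ≤ CF * β ^ sepTime F p (F x) (F y))
    (hCF : 0 < CF) (hβ0 : 0 < β) (hβ1 : β < 1)
    {i N : ℕ} (hiN : i ≤ N) {a b : M} (ha : a ∈ Δ₀) (hb : b ∈ Δ₀)
    (hagree : ∀ t, t < N → p (F^[t] a) = p (F^[t] b)) :
    Real.log (JProd F J i a / JProd F J i b) ≤ CF/(1-β) * β^(N-i) := by
  have hβnn : (0:ℝ) ≤ β := le_of_lt hβ0
  have h1β : (0:ℝ) < 1 - β := by linarith
  have hrhs_nonneg : 0 ≤ CF/(1-β) * β^(N-i) :=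
    mul_nonneg (le_of_lt (div_pos hCF h1β)) (pow_nonneg hβnn _)
  have hiterΔ : ∀ (x : M), x ∈ Δ₀ → ∀ t : ℕ, F^[t] x ∈ Δ₀ := by
    intro x hx t
    induction t with
    | zero => exact hx
    | succ t ih => rw [Function.iterate_succ_apply' F t x]; exact hmapsTo ih
  have hJa : ∀ t, 0 < J (F^[t] a) := fun t => hJpos _ (hiterΔ a ha t)
  have hJb : ∀ t, 0 < J (F^[t] b) := fun t => hJpos _ (hiterΔ b hb t)
  by_cases hab : a = b
  · subst hab
    have : JProd F J i a / JProd F J i a = 1 := by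
      apply div_self
      exact ne_of_gt (Finset.prod_pos (fun t _ => hJa t))
    rw [this, Real.log_one]
    exact hrhs_nonneg
  -- expand the log of the products
  have hPa : (0:ℝ) < JProd F J i a := Finset.prod_pos (fun t _ => hJa t)
  have hPb : (0:ℝ) < JProd F J i b := Finset.prod_pos (fun t _ => hJb t)
  rw [Real.log_div (ne_of_gt hPa) (ne_of_gt hPb), JProd, JProd,
    Real.log_prod (fun t _ => ne_of_gt (hJa t)),
    Real.log_prod (fun t _ => ne_of_gt (hJb t)), ← Finset.sum_sub_distrib]
  have hterm : ∀ t ∈ Finset.range i,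
      Real.log (J (F^[t] a)) - Real.log (J (F^[t] b)) ≤ CF * β^(N-t-1) := by
    intro t ht
    rw [Finset.mem_range] at ht
    rw [← Real.log_div (ne_of_gt (hJa t)) (ne_of_gt (hJb t))]
    by_cases heq : F^[t] a = F^[t] b
    · rw [heq, div_self (ne_of_gt (hJb t)), Real.log_one]
      exact mul_nonneg (le_of_lt hCF) (pow_nonneg hβnn _)
    · have hmema : F^[t] a ∈ pElem Δ₀ p (p (F^[t] a)) := ⟨hiterΔ a ha t, rfl⟩
      have hmemb : F^[t] b ∈ pElem Δ₀ p (p (F^[t] a)) :=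
        ⟨hiterΔ b hb t, by rw [Set.mem_preimage, Set.mem_singleton_iff,
          ← hagree t (by omega)]⟩
      have hg := hgibbs (p (F^[t] a)) _ hmema _ hmemb
      have hFne : F (F^[t] a) ≠ F (F^[t] b) := by
        intro hcon
        exact heq (hinj (p (F^[t] a)) hmema hmemb hcon)
      have hFa : F (F^[t] a) = F^[t+1] a := (Function.iterate_succ_apply' F t a).symm
      have hFb : F (F^[t] b) = F^[t+1] b := (Function.iterate_succ_apply' F t b).symm
      have hsepge : N - t - 1 ≤ sepTime F p (F (F^[t] a)) (F (F^[t] b)) := by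
        rw [hFa, hFb]
        apply sepTime_ge hsep (hiterΔ a ha (t+1)) (hiterΔ b hb (t+1))
          (by rw [← hFa, ← hFb]; exact hFne)
        intro s hs
        have e1 : F^[s] (F^[t+1] a) = F^[s + (t+1)] a :=
          (Function.iterate_add_apply F s (t+1) a).symm
        have e2 : F^[s] (F^[t+1] b) = F^[s + (t+1)] b :=
          (Function.iterate_add_apply F s (t+1) b).symm
        rw [e1, e2]
        exact hagree _ (by omega)
      calc Real.log (J (F^[t] a) / J (F^[t] b))
          ≤ CF * β ^ sepTime F p (F (F^[t] a)) (F (F^[t] b)) := hg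
        _ ≤ CF * β^(N-t-1) := by
            apply mul_le_mul_of_nonneg_left _ (le_of_lt hCF)
            exact pow_le_pow_of_le_one hβnn (le_of_lt hβ1) hsepge
  calc ∑ t ∈ Finset.range i, (Real.log (J (F^[t] a)) - Real.log (J (F^[t] b)))
      ≤ ∑ t ∈ Finset.range i, CF * β^(N-t-1) := Finset.sum_le_sum hterm
    _ = CF * ∑ t ∈ Finset.range i, β^(N-t-1) := by rw [Finset.mul_sum]
    _ ≤ CF/(1-β) * β^(N-i) := by
        have hsum : ∑ t ∈ Finset.range i, β^(N-t-1)
            = β^(N-i) * ∑ t ∈ Finset.range i, β^(i-1-t) := by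
          rw [Finset.mul_sum]
          apply Finset.sum_congr rfl
          intro t ht
          rw [Finset.mem_range] at ht
          rw [← pow_add]
          congr 1
          omega
        have hsum2 : ∑ t ∈ Finset.range i, β^(i-1-t) = ∑ t ∈ Finset.range i, β^t := by
          have := Finset.sum_range_reflect (fun t => β^t) i
          simpa using this
        rw [hsum, hsum2]
        calc CF * (β^(N-i) * ∑ t ∈ Finset.range i, β^t)
            ≤ CF * (β^(N-i) * (1/(1-β))) := by
              apply mul_le_mul_of_nonneg_left _ (le_of_lt hCF)
              apply mul_le_mul_of_nonneg_left (geom_le hβnn hβ1 i) (pow_nonneg hβnn _)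
          _ = CF/(1-β) * β^(N-i) := by ring

lemma meas_nat_set (s : Set ℕ) : MeasurableSet s := by
  have : s = ⋃ j ∈ s, {j} := by simp
  rw [this]
  exact MeasurableSet.biUnion (Set.to_countable s)
    (fun j _ => measurableSet_singleton _)

lemma meas_towerMap {f : M → M} {R : M → ℕ} (hF : Measurable (inducedF f R))
    (hR : Measurable R) : Measurable (towerMap f R) := by
  have hcond : MeasurableSet {q : M × ℕ | q.2 + 1 < R q.1} := by
    have he : {q : M × ℕ | q.2 + 1 < R q.1}
        = ⋃ ℓ : ℕ, (Prod.snd ⁻¹' {ℓ}) ∩ (Prod.fst ⁻¹' (R ⁻¹' {j | ℓ + 1 < j})) := by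
      ext r
      simp only [Set.mem_setOf_eq, Set.mem_iUnion, Set.mem_inter_iff,
        Set.mem_preimage, Set.mem_singleton_iff]
      constructor
      · intro h; exact ⟨r.2, rfl, h⟩
      · rintro ⟨ℓ, h1, h2⟩; rw [← h1] at h2; exact h2
    rw [he]
    apply MeasurableSet.iUnion
    intro ℓ
    exact (measurable_snd (measurableSet_singleton _)).inter
      (measurable_fst (hR (meas_nat_set _)))
  unfold towerMap
  apply Measurable.ite hcond
  · exact measurable_fst.prodMk ((measurable_from_top).comp measurable_snd)
  · exact (hF.comp measurable_fst).prodMk measurable_const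

lemma map_withDensity_comm {α β : Type*} [MeasurableSpace α] [MeasurableSpace β]
    (ν : Measure α) {e : α → β} (he : Measurable e) {h : β → ℝ≥0∞}
    (hh : Measurable h) :
    (Measure.map e ν).withDensity h = Measure.map e (ν.withDensity (fun a => h (e a))) := by
  ext s hs
  rw [withDensity_apply _ hs, Measure.map_apply he hs, withDensity_apply _ (he hs),
    ← lintegral_indicator hs, ← lintegral_indicator (he hs),
    lintegral_map (hh.indicator hs) he]
  apply lintegral_congr
  intro a
  by_cases h1 : e a ∈ s
  · rw [Set.indicator_of_mem h1, Set.indicator_of_mem (by exact h1)]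
  · rw [Set.indicator_of_notMem h1, Set.indicator_of_notMem (by exact h1)]

lemma towerWD (m : Measure M) {Δ₀ : Set M} {R : M → ℕ} (hΔ : MeasurableSet Δ₀)
    (hR : Measurable R) {B : Set M} (hB : MeasurableSet B) {ℓ : ℕ}
    (hBsub : B ⊆ Δ₀ ∩ {x | ℓ < R x}) {h : M × ℕ → ℝ≥0∞} (hh : Measurable h)
    (hsupp : ∀ r : M × ℕ, ¬(r.2 = ℓ ∧ r.1 ∈ B) → h r = 0) :
    (towerMeasure m Δ₀ R).withDensity h
      = Measure.map (fun x => (x, ℓ)) ((m.restrict B).withDensity (fun x => h (x, ℓ))) := by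
  have hemeas : ∀ ℓ' : ℕ, Measurable (fun x : M => (x, ℓ')) :=
    fun ℓ' => measurable_id.prodMk measurable_const
  ext s hs
  rw [withDensity_apply _ hs, Measure.map_apply (hemeas ℓ) hs,
    withDensity_apply _ ((hemeas ℓ) hs),
    ← lintegral_indicator hs, ← lintegral_indicator ((hemeas ℓ) hs)]
  simp only [towerMeasure]
  rw [lintegral_sum_measure]
  have hz : ∀ ℓ', ℓ' ≠ ℓ → ∫⁻ r, s.indicator h r
      ∂((m.restrict (Δ₀ ∩ {x | ℓ' < R x})).map (fun x => (x, ℓ'))) = 0 := by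
    intro ℓ' hℓ'
    rw [lintegral_map (hh.indicator hs) (hemeas ℓ')]
    have hzero : ∀ x : M, s.indicator h (x, ℓ') = 0 := by
      intro x
      by_cases hxs : (x, ℓ') ∈ s
      · rw [Set.indicator_of_mem hxs]; exact hsupp (x, ℓ') (fun hc => hℓ' hc.1)
      · rw [Set.indicator_of_notMem hxs]
    rw [lintegral_congr hzero, lintegral_zero]
  rw [tsum_eq_single ℓ hz, lintegral_map (hh.indicator hs) (hemeas ℓ)]
  have hpt : ∀ x : M, s.indicator h (x, ℓ)
      = B.indicator (fun x => ((fun x : M => (x, ℓ)) ⁻¹' s).indicator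
          (fun x => h (x, ℓ)) x) x := by
    intro x
    by_cases hxB : x ∈ B
    · by_cases hxs : (x, ℓ) ∈ s
      · rw [Set.indicator_of_mem hxs, Set.indicator_of_mem hxB,
          Set.indicator_of_mem (by exact hxs)]
      · rw [Set.indicator_of_notMem hxs, Set.indicator_of_mem hxB,
          Set.indicator_of_notMem (by exact hxs)]
    · rw [Set.indicator_of_notMem hxB]
      by_cases hxs : (x, ℓ) ∈ s
      · rw [Set.indicator_of_mem hxs]; exact hsupp (x, ℓ) (fun hc => hxB hc.2)
      · rw [Set.indicator_of_notMem hxs]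
  rw [lintegral_congr hpt, lintegral_indicator hB,
    Measure.restrict_restrict hB, inter_eq_self_of_subset_left hBsub]

/-- iterated change of variables along a cylinder -/
lemma ITERfull (m : Measure M) (Δ₀ : Set M) (F : M → M) (p : M → ℕ) (J : M → ℝ)
    (hΔ : MeasurableSet Δ₀) (hfin : m Δ₀ < ⊤) (hF : Measurable F) (hJ : Measurable J)
    (hp : Measurable p) (hmapsTo : MapsTo F Δ₀ Δ₀)
    (nonsing : ∀ i, ∀ A : Set M, A ⊆ pElem Δ₀ p i → MeasurableSet A →
      m (F '' A) = ∫⁻ a in A, ENNReal.ofReal (J a) ∂m)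
    {Z : Set M} (hZmeas : MeasurableSet Z) (hZΔ : Z ⊆ Δ₀) {i : ℕ} {u : ℕ → ℕ}
    (hZu : ∀ x ∈ Z, ∀ j, j < i → p (F^[j] x) = u j)
    {W : Set M} (hWmeas : MeasurableSet W) (hWΔ : W ⊆ Δ₀)
    (hWsub : ∀ x ∈ Z, F^[i] x ∈ W)
    (hZJ : ∀ x ∈ Z, ∀ t, 0 < J (F^[t] x)) :
    ∃ A : Set M, MeasurableSet A ∧ A ⊆ W ∧ (∀ x ∈ Z, F^[i] x ∈ A) ∧
      ∀ v : M → ℝ≥0∞, Measurable v →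
        Measure.map (F^[i]) ((m.restrict Z).withDensity
            (fun x => ENNReal.ofReal (JProd F J i x) * v (F^[i] x)))
          = (m.restrict A).withDensity v := by
  classical
  have hiterΔ : ∀ x ∈ Z, ∀ t : ℕ, F^[t] x ∈ Δ₀ := by
    intro x hx t
    induction t with
    | zero => exact hZΔ hx
    | succ t ih => rw [Function.iterate_succ_apply' F t x]; exact hmapsTo ih
  have key : ∀ j, j ≤ i → ∃ A : Set M, MeasurableSet A ∧
      (j < i → A ⊆ pElem Δ₀ p (u j)) ∧ (j = i → A ⊆ W) ∧
      (∀ x ∈ Z, F^[j] x ∈ A) ∧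
      ∀ v : M → ℝ≥0∞, Measurable v →
        Measure.map (F^[j]) ((m.restrict Z).withDensity
            (fun x => ENNReal.ofReal (JProd F J j x) * v (F^[j] x)))
          = (m.restrict A).withDensity v := by
    intro j
    induction j with
    | zero =>
      intro _
      refine ⟨Z, hZmeas, ?_, ?_, fun x hx => hx, ?_⟩
      · intro h0i x hx
        refine ⟨hZΔ hx, ?_⟩
        have := hZu x hx 0 h0i
        simpa using this
      · intro h0i x hx
        have := hWsub x hx
        rw [← h0i] at this
        simpa using this
      · intro v hv
        have hdeq : (fun x => ENNReal.ofReal (JProd F J 0 x) * v (F^[0] x)) = v := by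
          funext x
          simp [JProd_zero]
        rw [hdeq, Function.iterate_zero, Measure.map_id]
    | succ j ih =>
      intro hj
      obtain ⟨A, hAmeas, hApe, _, hFZ, hid⟩ := ih (by omega)
      have hji : j < i := by omega
      by_cases hcase : j + 1 < i
      · obtain ⟨A', hA'meas, hA'S, _, hmem', hid'⟩ :=
          STEP m Δ₀ F p J hΔ hfin hF hJ hmapsTo nonsing hZmeas hAmeas (hApe hji)
            (hΔ.inter (hp (measurableSet_singleton _)))
            (fun x hx => ⟨hiterΔ x hx (j+1), hZu x hx (j+1) hcase⟩) hFZ hid hZJ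
        exact ⟨A', hA'meas, fun _ => hA'S, fun hc => absurd hc (by omega), hmem', hid'⟩
      · have hji1 : j + 1 = i := by omega
        obtain ⟨A', hA'meas, hA'S, _, hmem', hid'⟩ :=
          STEP m Δ₀ F p J hΔ hfin hF hJ hmapsTo nonsing hZmeas hAmeas (hApe hji)
            hWmeas (fun x hx => by rw [hji1]; exact hWsub x hx) hFZ hid hZJ
        exact ⟨A', hA'meas, fun hc => absurd hc (by omega), fun _ => hA'S, hmem', hid'⟩
  obtain ⟨A, hAmeas, _, hAW, hmem, hid⟩ := key i le_rfl
  exact ⟨A, hAmeas, hAW rfl, hmem, hid⟩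

end AUX

set_option maxHeartbeats 2000000

/-- **Lemma (distortion of pushforward densities on the tower).** For `λ₁` with density
`φ₁ ∈ ℱ_β⁺(Δ)` (ratio constant `C′_{φ₁}`), the density of `T_*ⁿ(λ₁|ω)` w.r.t. `m`, for
`ω ∈ η_n`, has ratios on `Tⁿ(ω)` bounded by `C₁ = C′_T (1 + C′_{φ₁} βⁱ)`, where `i` is
the number of visits of `ω` to the base up to time `n` and `C′_T` does not depend on
`φ₁`; in particular the dependence on `C′_{φ₁}` disappears as `i → ∞`. -/
theorem pushforward_density_distortion
    {M : Type*} [MeasurableSpace M]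
    (m : Measure M) (f : M → M) (Δ₀ : Set M) (R : M → ℕ) (p : M → ℕ) (J : M → ℝ)
    (CF β δ₀ : ℝ) (hWGM : IsInducedWGM m f Δ₀ R p J CF β δ₀) :
    ∃ C'T : ℝ, 0 < C'T ∧
      ∀ (lam : Measure (M × ℕ)) (φ₁ : M × ℕ → ℝ) (Cφ₁ : ℝ),
        GoodDensity m f Δ₀ R p β φ₁ Cφ₁ →
        lam = (towerMeasure m Δ₀ R).withDensity (fun q => ENNReal.ofReal (φ₁ q)) →
        ∀ n : ℕ, 1 ≤ n → ∀ q ∈ towerSet Δ₀ R,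
          0 < towerMeasure m Δ₀ R (etaCellN f R p Δ₀ n q) →
          ∃ g : M × ℕ → ℝ,
            Measure.map ((towerMap f R)^[n]) (lam.restrict (etaCellN f R p Δ₀ n q)) =
              (towerMeasure m Δ₀ R).withDensity (fun r => ENNReal.ofReal (g r)) ∧
            ∀ x ∈ (towerMap f R)^[n] '' etaCellN f R p Δ₀ n q,
              ∀ y ∈ (towerMap f R)^[n] '' etaCellN f R p Δ₀ n q,
                g x ≤ (C'T * (1 + Cφ₁ * β ^
                    ((Finset.Icc 1 n).filter
                      (fun k => ((towerMap f R)^[k] q).2 = 0)).card)) * g y := by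
  classical
  obtain ⟨hW, hmR, hRpos, hRconst⟩ := hWGM
  have hΔ := hW.meas_Δ₀
  have hfin := hW.fin
  have hFm : Measurable (inducedF f R) := hW.meas_F
  have hpm := hW.meas_p
  have hJm := hW.meas_J
  have hmaps := hW.mapsTo
  have hinj := hW.injOn
  have hsep := hW.separating
  have hJpos := hW.J_pos
  have hnonsing := hW.nonsing
  have hCF := hW.CF_pos
  have hβ0 := hW.β_pos
  have hβ1 := hW.β_lt_one
  have hβnn : (0:ℝ) ≤ β := le_of_lt hβ0
  have h1β : (0:ℝ) < 1 - β := by linarith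
  have hδ'pos : 0 < CF / (1 - β) := div_pos hCF h1β
  have hCTpos : (0:ℝ) < Real.exp (CF / (1 - β)) := Real.exp_pos _
  have hCT1 : (1:ℝ) ≤ Real.exp (CF / (1 - β)) := by
    have := Real.add_one_le_exp (CF / (1 - β)); linarith
  refine ⟨Real.exp (CF / (1 - β)), hCTpos, ?_⟩
  intro lam φ₁ Cφ₁ hGD hlam n hn q hq _
  obtain ⟨_, hMemF, hφpos, hCφ0, hratio⟩ := hGD
  obtain ⟨CM, hCM0, hHolder⟩ := hMemF
  subst hlam
  have hTm : Measurable (towerMap f R) := meas_towerMap hFm hmR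
  have hiterΔ : ∀ x ∈ Δ₀, ∀ t : ℕ, (inducedF f R)^[t] x ∈ Δ₀ := by
    intro x hx t
    induction t with
    | zero => exact hx
    | succ t ih => rw [Function.iterate_succ_apply']; exact hmaps ih
  have horb := tower_orbit hmaps hRpos hq
  set i := vis f R q n with hidef
  set ℓn := ((towerMap f R)^[n] q).2 with hℓndef
  set Z : Set M := Δ₀ ∩ ⋂ (k : ℕ), ⋂ (_ : k < n),
      (fun x => p ((inducedF f R)^[vis f R q k] x)) ⁻¹'
        {p (((towerMap f R)^[k] q).1)} with hZdef
  have hZmem : ∀ x : M, x ∈ Z ↔ x ∈ Δ₀ ∧ ∀ k, k < n →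
      p ((inducedF f R)^[vis f R q k] x) = p (((towerMap f R)^[k] q).1) := by
    intro x
    simp only [hZdef, Set.mem_inter_iff, Set.mem_iInter, Set.mem_preimage,
      Set.mem_singleton_iff]
  have hZmeas : MeasurableSet Z :=
    hΔ.inter (MeasurableSet.iInter (fun k => MeasurableSet.iInter (fun _ =>
      (hpm.comp (hFm.iterate _)) (measurableSet_singleton _))))
  have hZΔ : Z ⊆ Δ₀ := fun x hx => ((hZmem x).1 hx).1
  have hq1Z : q.1 ∈ Z := by
    rw [hZmem]
    exact ⟨hq.1, fun k hk => by rw [(horb k).1]⟩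
  have hRZ : ∀ x ∈ Z, R x = R q.1 := by
    intro x hx
    apply hRconst x (hZΔ hx) q.1 hq.1
    have h0 := ((hZmem x).1 hx).2 0 (by omega)
    rw [(horb 0).1] at h0
    simpa [vis_zero] using h0
  have hxtow : ∀ x ∈ Z, (x, q.2) ∈ towerSet Δ₀ R :=
    fun x hx => ⟨hZΔ hx, by rw [hRZ x hx]; exact hq.2⟩
  have hstruct : ∀ x ∈ Z, ∀ k, k ≤ n → (towerMap f R)^[k] (x, q.2)
      = ((inducedF f R)^[vis f R q k] x, ((towerMap f R)^[k] q).2) :=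
    fun x hx => cell_orbit hmaps hRpos hRconst hq (hZΔ hx) (((hZmem x).1 hx).2)
  have hCZ : etaCellN f R p Δ₀ n q = {r : M × ℕ | r.1 ∈ Z ∧ r.2 = q.2} := by
    ext r
    constructor
    · intro hr
      obtain ⟨h2, h1, h3⟩ := cell_struct hmaps hRpos hRconst hq hn hr
      exact ⟨(hZmem r.1).2 ⟨h1, h3⟩, h2⟩
    · rintro ⟨hr1, hr2⟩
      have hrr : r = (r.1, q.2) := by rw [← hr2]
      refine ⟨?_, ?_⟩
      · rw [hrr]; exact hxtow r.1 hr1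
      · intro k hk
        have hs := hstruct r.1 hr1 k (le_of_lt hk)
        rw [hrr, hs]
        show (p ((inducedF f R)^[vis f R q k] r.1), ((towerMap f R)^[k] q).2)
          = (p (((towerMap f R)^[k] q).1), ((towerMap f R)^[k] q).2)
        rw [((hZmem r.1).1 hr1).2 k hk]
  set d := vis f R q (n-1) + 1 with hddef
  have hidle : i ≤ d := by
    have hn' : n - 1 + 1 = n := by omega
    have hst := vis_step f R q (n-1)
    rw [hn'] at hst
    rw [hidef, hddef]
    rcases hst with h | h <;> omega
  have hd1 : 1 ≤ d := by omega
  have hZu : ∀ x ∈ Z, ∀ t, t < d → p ((inducedF f R)^[t] x)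
      = p ((inducedF f R)^[t] q.1) := by
    intro x hx t ht
    obtain ⟨k, hk, hck⟩ := nat_slow_surj (vis f R q) (vis_zero f R q)
      (vis_step f R q) (n-1) t (by omega)
    have hkn : k < n := by omega
    have h1 := ((hZmem x).1 hx).2 k hkn
    have h2 := (horb k).1
    rw [hck] at h1
    rw [h1, h2, hck]
  have hagree : ∀ a ∈ Z, ∀ b ∈ Z, ∀ t, t < d →
      p ((inducedF f R)^[t] a) = p ((inducedF f R)^[t] b) :=
    fun a ha b hb t ht => (hZu a ha t ht).trans (hZu b hb t ht).symm
  have htopmem : ∀ x ∈ Z, (inducedF f R)^[i] x ∈ Δ₀ ∧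
      ℓn < R ((inducedF f R)^[i] x) := by
    intro x hx
    have h1 := (tower_orbit hmaps hRpos (hxtow x hx) n).2
    rw [hstruct x hx n le_rfl] at h1
    exact ⟨h1.1, h1.2⟩
  have hZJ : ∀ x ∈ Z, ∀ t, 0 < J ((inducedF f R)^[t] x) :=
    fun x hx t => hJpos _ (hiterΔ _ (hZΔ hx) t)
  have hWm : MeasurableSet (Δ₀ ∩ {x | ℓn < R x}) := by
    apply hΔ.inter
    exact hmR (meas_nat_set {j | ℓn < j})
  obtain ⟨A, hAmeas, hAW, hFZA, hID⟩ := ITERfull m Δ₀ (inducedF f R) p J hΔ hfin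
    hFm hJm hpm hmaps hnonsing hZmeas hZΔ
    (u := fun t => p ((inducedF f R)^[t] q.1))
    (fun x hx j hj => hZu x hx j (lt_of_lt_of_le hj hidle))
    hWm Set.inter_subset_left
    (fun x hx => ⟨(htopmem x hx).1, (htopmem x hx).2⟩) hZJ
  -- the density after the push
  set ρ : M → ℝ := fun x => φ₁ (x, q.2) / JProd (inducedF f R) J i x with hρdef
  have hinjZ : ∀ x ∈ Z, ∀ x' ∈ Z,
      (inducedF f R)^[i] x = (inducedF f R)^[i] x' → x = x' := by
    intro x hx x' hx' hFeq
    by_contra hne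
    obtain ⟨t₀, ht₀⟩ := hsep x (hZΔ hx) x' (hZΔ hx') hne
    apply ht₀
    by_cases htd : t₀ < d
    · exact hagree x hx x' hx' t₀ htd
    · have e1 : (inducedF f R)^[t₀] x
          = (inducedF f R)^[t₀ - i] ((inducedF f R)^[i] x) := by
        rw [← Function.iterate_add_apply]
        congr 1
        omega
      have e2 : (inducedF f R)^[t₀] x'
          = (inducedF f R)^[t₀ - i] ((inducedF f R)^[i] x') := by
        rw [← Function.iterate_add_apply]
        congr 1
        omega
      rw [e1, e2, hFeq]
  set g₀ : M → ℝ := fun y =>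
    if h : ∃ x, x ∈ Z ∧ (inducedF f R)^[i] x = y then ρ h.choose else 0 with hg₀def
  have hg₀mem : ∀ y, (h : ∃ x, x ∈ Z ∧ (inducedF f R)^[i] x = y) →
      ∃ x, (x ∈ Z ∧ (inducedF f R)^[i] x = y) ∧ g₀ y = ρ x := by
    intro y hy
    exact ⟨hy.choose, hy.choose_spec, by rw [hg₀def]; exact dif_pos hy⟩
  have hg₀Z : ∀ x ∈ Z, g₀ ((inducedF f R)^[i] x) = ρ x := by
    intro x hx
    obtain ⟨x', ⟨hx'Z, hx'eq⟩, hval⟩ := hg₀mem _ ⟨x, hx, rfl⟩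
    rw [hval, hinjZ x' hx'Z x hx hx'eq]
  have hJprodpos : ∀ x ∈ Z, 0 < JProd (inducedF f R) J i x :=
    fun x hx => Finset.prod_pos (fun t _ => hZJ x hx t)
  have hJDk : ∀ k : ℕ, ∀ a ∈ Z, ∀ b ∈ Z,
      (∀ t, t < i + k → p ((inducedF f R)^[t] a) = p ((inducedF f R)^[t] b)) →
      JProd (inducedF f R) J i a
        ≤ Real.exp (CF/(1-β) * β^k) * JProd (inducedF f R) J i b := by
    intro k a ha b hb hag
    have h := JD hmaps hJpos hinj hsep hW.gibbs hCF hβ0 hβ1 (Nat.le_add_right i k)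
      (hZΔ ha) (hZΔ hb) hag
    have hik : i + k - i = k := by omega
    rw [hik] at h
    have hpos : 0 < JProd (inducedF f R) J i a / JProd (inducedF f R) J i b :=
      div_pos (hJprodpos a ha) (hJprodpos b hb)
    rw [Real.log_le_iff_le_exp hpos, div_le_iff₀ (hJprodpos b hb)] at h
    linarith
  have hJZbound : ∀ a ∈ Z, ∀ b ∈ Z, JProd (inducedF f R) J i a
      ≤ Real.exp (CF/(1-β)) * JProd (inducedF f R) J i b := by
    intro a ha b hb
    have h := hJDk 0 a ha b hb (fun t ht => hagree a ha b hb t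
      (by omega : t < d))
    simpa using h
  have hsepTZ : ∀ k : ℕ, ∀ a ∈ Z, ∀ b ∈ Z, a ≠ b →
      (∀ t, t < k → p ((inducedF f R)^[t] a) = p ((inducedF f R)^[t] b)) →
      (β : ℝ)^(towerSep f R p (a, q.2) (b, q.2)) ≤ β^k := by
    intro k a ha b hb hab hagr
    have he : towerSep f R p (a, q.2) (b, q.2) = sepTime (inducedF f R) p a b := by
      simp [towerSep]
    rw [he]
    exact pow_le_pow_of_le_one hβnn hβ1.le
      (sepTime_ge hsep (hZΔ ha) (hZΔ hb) hab hagr)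
  have hφZpos : ∀ a ∈ Z, 0 < φ₁ (a, q.2) := fun a ha => hφpos _ (hxtow a ha)
  have hφdiff : ∀ k : ℕ, ∀ a ∈ Z, ∀ b ∈ Z,
      (∀ t, t < k → p ((inducedF f R)^[t] a) = p ((inducedF f R)^[t] b)) →
      |φ₁ (a, q.2) - φ₁ (b, q.2)| ≤ CM * β^k := by
    intro k a ha b hb hagr
    by_cases hab : a = b
    · subst hab
      simp only [sub_self, abs_zero]
      positivity
    · calc |φ₁ (a, q.2) - φ₁ (b, q.2)|
          ≤ CM * β^(towerSep f R p (a, q.2) (b, q.2)) :=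
            hHolder (a, q.2) (hxtow a ha) (b, q.2) (hxtow b hb)
        _ ≤ CM * β^k := mul_le_mul_of_nonneg_left
            (hsepTZ k a ha b hb hab hagr) hCM0.le
  have hφratio : ∀ a ∈ Z, ∀ b ∈ Z,
      φ₁ (a, q.2) ≤ (1 + Cφ₁ * β^i) * φ₁ (b, q.2) := by
    intro a ha b hb
    have hcpos : 0 < Cφ₁ * β^i := mul_pos hCφ0 (pow_pos hβ0 i)
    by_cases hab : a = b
    · subst hab
      nlinarith [hφZpos a ha]
    · have hpa : p a = p b := by
        have h := hagree a ha b hb 0 (by omega)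
        simpa using h
      have hidx : towerIdx p (a, q.2) = towerIdx p (b, q.2) := by
        simp only [towerIdx, hpa]
      have h := hratio (a, q.2) (hxtow a ha) (b, q.2) (hxtow b hb) hidx
      have hsep' : (β:ℝ)^(towerSep f R p (a, q.2) (b, q.2)) ≤ β^i :=
        hsepTZ i a ha b hb hab (fun t ht => hagree a ha b hb t (by omega))
      have habs := (abs_le.1 h).2
      have h2 : φ₁ (a, q.2) / φ₁ (b, q.2) ≤ 1 + Cφ₁ * β^i := by
        nlinarith [mul_le_mul_of_nonneg_left hsep' hCφ0.le]
      rw [div_le_iff₀ (hφZpos b hb)] at h2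
      linarith
  set Φ : ℝ := |φ₁ q| + CM with hΦdef
  have hΦ0 : 0 ≤ Φ := by rw [hΦdef]; positivity
  have hφbound : ∀ a ∈ Z, φ₁ (a, q.2) ≤ Φ := by
    intro a ha
    have h := hHolder (a, q.2) (hxtow a ha) q hq
    have h2 : (β:ℝ)^(towerSep f R p (a, q.2) q) ≤ 1 := pow_le_one₀ hβnn hβ1.le
    have h3 := abs_sub_abs_le_abs_sub (φ₁ (a, q.2)) (φ₁ q)
    have h4 := le_abs_self (φ₁ (a, q.2))
    nlinarith [mul_le_mul_of_nonneg_left h2 hCM0.le]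
  set Jq := JProd (inducedF f R) J i q.1 with hJqdef
  have hJq0 : 0 < Jq := hJprodpos q.1 hq1Z
  set X : ℝ := Φ * (CF/(1-β)) * Real.exp (CF/(1-β)) + CM * Real.exp (CF/(1-β))
    with hXdef
  have hX0 : 0 ≤ X := by
    rw [hXdef]
    have : 0 ≤ Φ * (CF/(1-β)) * Real.exp (CF/(1-β)) := by positivity
    nlinarith [hCM0, hCTpos]
  set K : ℝ := X * (Real.exp (CF/(1-β)) / Jq) with hKdef
  have hK0 : 0 ≤ K := by
    rw [hKdef]
    positivity
  have hρdiff : ∀ k : ℕ, ∀ a ∈ Z, ∀ b ∈ Z,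
      (∀ t, t < i + k → p ((inducedF f R)^[t] a) = p ((inducedF f R)^[t] b)) →
      |ρ a - ρ b| ≤ K * β^k := by
    have hone : ∀ k : ℕ, ∀ a ∈ Z, ∀ b ∈ Z,
        (∀ t, t < i + k → p ((inducedF f R)^[t] a) = p ((inducedF f R)^[t] b)) →
        ρ a - ρ b ≤ K * β^k := by
      intro k a ha b hb hagr
      have hJa0 := hJprodpos a ha
      have hJb0 := hJprodpos b hb
      have hφb0 := hφZpos b hb
      have hβk0 : (0:ℝ) ≤ β^k := pow_nonneg hβnn k
      have hc0 : (0:ℝ) ≤ CF/(1-β) * β^k := by positivity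
      have hce : Real.exp (CF/(1-β) * β^k) ≤ Real.exp (CF/(1-β)) := by
        apply Real.exp_le_exp.2
        nlinarith [pow_le_one₀ hβnn hβ1.le (n := k)]
      have hce1 : (1:ℝ) ≤ Real.exp (CF/(1-β) * β^k) := by
        have := Real.add_one_le_exp (CF/(1-β) * β^k); linarith
      have hba : JProd (inducedF f R) J i b
          ≤ Real.exp (CF/(1-β) * β^k) * JProd (inducedF f R) J i a :=
        hJDk k b hb a ha (fun t ht => (hagr t ht).symm)
      have hφab : φ₁ (a, q.2) ≤ φ₁ (b, q.2) + CM * β^k := by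
        have h := (abs_le.1 (hφdiff k a ha b hb
          (fun t ht => hagr t (by omega)))).2
        linarith
      have h1Ja : 1 / JProd (inducedF f R) J i a
          ≤ Real.exp (CF/(1-β) * β^k) / JProd (inducedF f R) J i b := by
        rw [div_le_div_iff₀ hJa0 hJb0]
        nlinarith
      have hstep1 : ρ a ≤ (φ₁ (b, q.2) + CM * β^k)
          * (Real.exp (CF/(1-β) * β^k) / JProd (inducedF f R) J i b) := by
        have hra : ρ a = φ₁ (a, q.2) * (1 / JProd (inducedF f R) J i a) := by
          simp only [hρdef]; ring
        rw [hra]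
        apply mul_le_mul hφab h1Ja (by positivity) (by nlinarith)
      have he1 : Real.exp (CF/(1-β) * β^k) - 1
          ≤ (CF/(1-β)) * β^k * Real.exp (CF/(1-β)) := by
        have h := exp_sub_one_le_mul (CF/(1-β) * β^k)
        nlinarith [Real.exp_pos (CF/(1-β) * β^k)]
      have hXb : (φ₁ (b, q.2) + CM * β^k) * Real.exp (CF/(1-β) * β^k) - φ₁ (b, q.2)
          ≤ X * β^k := by
        have hiden : (φ₁ (b, q.2) + CM * β^k) * Real.exp (CF/(1-β) * β^k) - φ₁ (b, q.2)
            = φ₁ (b, q.2) * (Real.exp (CF/(1-β) * β^k) - 1)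
              + (CM * β^k) * Real.exp (CF/(1-β) * β^k) := by ring
        rw [hiden, hXdef]
        have hb1 : φ₁ (b, q.2) * (Real.exp (CF/(1-β) * β^k) - 1)
            ≤ Φ * ((CF/(1-β)) * β^k * Real.exp (CF/(1-β))) := by
          apply mul_le_mul (hφbound b hb) he1 (by linarith) hΦ0
        have hb2 : (CM * β^k) * Real.exp (CF/(1-β) * β^k)
            ≤ (CM * β^k) * Real.exp (CF/(1-β)) := by
          apply mul_le_mul_of_nonneg_left hce (by positivity)
        nlinarith
      have hsub : ρ a - ρ b ≤ ((φ₁ (b, q.2) + CM * β^k)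
          * Real.exp (CF/(1-β) * β^k) - φ₁ (b, q.2))
            * (1 / JProd (inducedF f R) J i b) := by
        have hrb : ρ b = φ₁ (b, q.2) * (1 / JProd (inducedF f R) J i b) := by
          simp only [hρdef]; ring
        have he : (φ₁ (b, q.2) + CM * β^k)
            * (Real.exp (CF/(1-β) * β^k) / JProd (inducedF f R) J i b)
            = ((φ₁ (b, q.2) + CM * β^k) * Real.exp (CF/(1-β) * β^k))
              * (1 / JProd (inducedF f R) J i b) := by ring
        rw [hrb]
        have := hstep1
        rw [he] at this
        nlinarith [this]
      have hJbinv : 1 / JProd (inducedF f R) J i b ≤ Real.exp (CF/(1-β)) / Jq := by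
        rw [div_le_div_iff₀ hJb0 hJq0]
        have := hJZbound q.1 hq1Z b hb
        nlinarith
      calc ρ a - ρ b ≤ ((φ₁ (b, q.2) + CM * β^k)
          * Real.exp (CF/(1-β) * β^k) - φ₁ (b, q.2))
            * (1 / JProd (inducedF f R) J i b) := hsub
        _ ≤ (X * β^k) * (Real.exp (CF/(1-β)) / Jq) := by
            apply mul_le_mul hXb hJbinv (by positivity) (by positivity)
        _ = K * β^k := by rw [hKdef]; ring
    intro k a ha b hb hagr
    rw [abs_sub_le_iff]
    exact ⟨hone k a ha b hb hagr, hone k b hb a ha (fun t ht => (hagr t ht).symm)⟩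
  -- measurable versions of the densities
  have hKtend : Filter.Tendsto (fun k : ℕ => K * β^k) Filter.atTop (nhds 0) := by
    have h := tendsto_pow_atTop_nhds_zero_of_lt_one hβnn hβ1
    have h2 := h.const_mul K
    simpa using h2
  have hCMtend : Filter.Tendsto (fun k : ℕ => CM * β^k) Filter.atTop (nhds 0) := by
    have h := tendsto_pow_atTop_nhds_zero_of_lt_one hβnn hβ1
    have h2 := h.const_mul CM
    simpa using h2
  obtain ⟨G, hGmeas, hGeq⟩ := exists_measurable_agree (inducedF f R) p hFm hpm
    ((inducedF f R)^[i] '' Z) g₀ (fun k => K * β^k) hKtend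
    (by
      intro k y hy y' hy' hagr
      obtain ⟨cy, ⟨hcyZ, hcye⟩, hvaly⟩ := hg₀mem y
        (by obtain ⟨x, h1, h2⟩ := hy; exact ⟨x, h1, h2⟩)
      obtain ⟨cy', ⟨hcy'Z, hcy'e⟩, hvaly'⟩ := hg₀mem y'
        (by obtain ⟨x, h1, h2⟩ := hy'; exact ⟨x, h1, h2⟩)
      rw [hvaly, hvaly']
      apply hρdiff k cy hcyZ cy' hcy'Z
      intro t ht
      by_cases htle : t < i
      · exact hagree cy hcyZ cy' hcy'Z t (lt_of_lt_of_le htle hidle)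
      · have e1 : (inducedF f R)^[t] cy
            = (inducedF f R)^[t - i] ((inducedF f R)^[i] cy) := by
          rw [← Function.iterate_add_apply]; congr 1; omega
        have e2 : (inducedF f R)^[t] cy'
            = (inducedF f R)^[t - i] ((inducedF f R)^[i] cy') := by
          rw [← Function.iterate_add_apply]; congr 1; omega
        rw [e1, e2, hcye, hcy'e]
        exact hagr (t - i) (by omega))
    (by
      intro y hy
      obtain ⟨cy, ⟨hcyZ, _⟩, hvaly⟩ := hg₀mem y
        (by obtain ⟨x, h1, h2⟩ := hy; exact ⟨x, h1, h2⟩)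
      rw [hvaly, hρdef]
      exact div_nonneg (hφZpos cy hcyZ).le (hJprodpos cy hcyZ).le)
  obtain ⟨ψ, hψmeas, hψeq⟩ := exists_measurable_agree (inducedF f R) p hFm hpm
    Z (fun x => φ₁ (x, q.2)) (fun k => CM * β^k) hCMtend
    (fun k a ha b hb hagr => hφdiff k a ha b hb hagr)
    (fun a ha => (hφZpos a ha).le)
  set vG : M → ℝ≥0∞ := fun y => ENNReal.ofReal (G y) with hvGdef
  have hvGmeas : Measurable vG := ENNReal.measurable_ofReal.comp hGmeas
  set g : M × ℕ → ℝ := fun r => if r.2 = ℓn ∧ r.1 ∈ A then G r.1 else 0 with hgdef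
  have hvGZval : ∀ x ∈ Z, ENNReal.ofReal (φ₁ (x, q.2))
      = ENNReal.ofReal (JProd (inducedF f R) J i x) * vG ((inducedF f R)^[i] x) := by
    intro x hx
    have h1 : vG ((inducedF f R)^[i] x) = ENNReal.ofReal (ρ x) := by
      show ENNReal.ofReal (G ((inducedF f R)^[i] x)) = ENNReal.ofReal (ρ x)
      rw [hGeq _ ⟨x, hx, rfl⟩, hg₀Z x hx]
    rw [h1, ← ENNReal.ofReal_mul (hJprodpos x hx).le]
    congr 1
    show φ₁ (x, q.2) = JProd (inducedF f R) J i x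
      * (φ₁ (x, q.2) / JProd (inducedF f R) J i x)
    rw [mul_comm, div_mul_cancel₀ _ (ne_of_gt (hJprodpos x hx))]
  -- the two sides of the measure identity
  have hCmeas : MeasurableSet (etaCellN f R p Δ₀ n q) := by
    rw [hCZ]
    have : {r : M × ℕ | r.1 ∈ Z ∧ r.2 = q.2}
        = (Prod.fst ⁻¹' Z) ∩ (Prod.snd ⁻¹' {q.2}) := rfl
    rw [this]
    exact (measurable_fst hZmeas).inter (measurable_snd (measurableSet_singleton _))
  have hZD : Z ⊆ Δ₀ ∩ {x | q.2 < R x} :=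
    fun x hx => ⟨hZΔ hx, by show q.2 < R x; rw [hRZ x hx]; exact hq.2⟩
  have hem : ∀ ℓ' : ℕ, Measurable (fun x : M => (x, ℓ')) :=
    fun ℓ' => measurable_id.prodMk measurable_const
  have he0m : Measurable (fun x : M => (x, q.2)) :=
    measurable_id.prodMk measurable_const
  have he1m : Measurable (fun x : M => (x, ℓn)) :=
    measurable_id.prodMk measurable_const
  have hμC : (towerMeasure m Δ₀ R).restrict (etaCellN f R p Δ₀ n q)
      = Measure.map (fun x => (x, q.2)) (m.restrict Z) := by
    ext s hs
    rw [Measure.restrict_apply hs, Measure.map_apply he0m hs,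
      Measure.restrict_apply (he0m hs)]
    simp only [towerMeasure]
    rw [Measure.sum_apply _ (hs.inter hCmeas)]
    have hz : ∀ ℓ', ℓ' ≠ q.2 →
        ((m.restrict (Δ₀ ∩ {x | ℓ' < R x})).map (fun x => (x, ℓ')))
          (s ∩ etaCellN f R p Δ₀ n q) = 0 := by
      intro ℓ' hℓ'
      rw [Measure.map_apply (hem ℓ') (hs.inter hCmeas)]
      apply measure_mono_null ?_ (measure_empty (μ := m.restrict (Δ₀ ∩ {x | ℓ' < R x})))
      intro x hx
      have := hx.2
      rw [hCZ] at this
      exact absurd this.2 hℓ'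
    rw [tsum_eq_single q.2 hz, Measure.map_apply (hem q.2) (hs.inter hCmeas)]
    have hpre : (fun x : M => (x, q.2)) ⁻¹' (s ∩ etaCellN f R p Δ₀ n q)
        = ((fun x : M => (x, q.2)) ⁻¹' s) ∩ Z := by
      ext x
      simp only [Set.mem_preimage, Set.mem_inter_iff, hCZ, Set.mem_setOf_eq]
      tauto
    rw [hpre, Measure.restrict_apply ((he0m hs).inter hZmeas)]
    rw [Set.inter_assoc, inter_eq_self_of_subset_left hZD]
  have hae1 : (fun r : M × ℕ => ENNReal.ofReal (φ₁ r))
      =ᵐ[(towerMeasure m Δ₀ R).restrict (etaCellN f R p Δ₀ n q)]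
      (fun r : M × ℕ => ENNReal.ofReal (ψ r.1)) := by
    rw [Filter.EventuallyEq, ae_restrict_iff' hCmeas]
    apply Filter.Eventually.of_forall
    intro r hr
    rw [hCZ] at hr
    have hrr : r = (r.1, q.2) := by rw [← hr.2]
    rw [hrr, hψeq r.1 hr.1]
  have hae2 : (fun x : M => ENNReal.ofReal (ψ x)) =ᵐ[m.restrict Z]
      (fun x => ENNReal.ofReal (JProd (inducedF f R) J i x)
        * vG ((inducedF f R)^[i] x)) := by
    rw [Filter.EventuallyEq, ae_restrict_iff' hZmeas]
    apply Filter.Eventually.of_forall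
    intro x hx
    rw [hψeq x hx]
    exact hvGZval x hx
  have hLHS : Measure.map ((towerMap f R)^[n])
      (((towerMeasure m Δ₀ R).withDensity
        (fun r => ENNReal.ofReal (φ₁ r))).restrict (etaCellN f R p Δ₀ n q))
      = Measure.map (fun x => (x, ℓn)) ((m.restrict A).withDensity vG) := by
    rw [restrict_withDensity hCmeas, withDensity_congr_ae hae1, hμC]
    rw [map_withDensity_comm (m.restrict Z) he0m
      (h := fun r : M × ℕ => ENNReal.ofReal (ψ r.1))
      (by exact ENNReal.measurable_ofReal.comp (hψmeas.comp measurable_fst))]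
    have hcomp : (fun a : M => ENNReal.ofReal (ψ ((a, q.2) : M × ℕ).1))
        = fun a : M => ENNReal.ofReal (ψ a) := rfl
    rw [hcomp, Measure.map_map (hTm.iterate n) he0m]
    have hEE : ((towerMap f R)^[n] ∘ (fun x : M => (x, q.2)))
        =ᵐ[(m.restrict Z).withDensity (fun x => ENNReal.ofReal (ψ x))]
        (fun x => ((inducedF f R)^[i] x, ℓn)) := by
      apply Filter.EventuallyEq.filter_mono ?_
        (Measure.AbsolutelyContinuous.ae_le
          (withDensity_absolutelyContinuous (m.restrict Z) _))
      rw [Filter.EventuallyEq, ae_restrict_iff' hZmeas]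
      apply Filter.Eventually.of_forall
      intro x hx
      show (towerMap f R)^[n] (x, q.2) = ((inducedF f R)^[i] x, ℓn)
      rw [hstruct x hx n le_rfl]
    rw [Measure.map_congr hEE, withDensity_congr_ae hae2]
    have hsplit : (fun x : M => ((inducedF f R)^[i] x, ℓn))
        = (fun x : M => (x, ℓn)) ∘ (inducedF f R)^[i] := rfl
    rw [hsplit, ← Measure.map_map he1m (hFm.iterate i)]
    rw [hID vG hvGmeas]
  have hgmeas : Measurable (fun r : M × ℕ => ENNReal.ofReal (g r)) := by
    apply ENNReal.measurable_ofReal.comp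
    rw [hgdef]
    have hcs : MeasurableSet {r : M × ℕ | r.2 = ℓn ∧ r.1 ∈ A} := by
      have : {r : M × ℕ | r.2 = ℓn ∧ r.1 ∈ A}
          = (Prod.snd ⁻¹' {ℓn}) ∩ (Prod.fst ⁻¹' A) := by
        ext r; simp [Set.mem_inter_iff, and_comm]
      rw [this]
      exact (measurable_snd (measurableSet_singleton _)).inter (measurable_fst hAmeas)
    exact Measurable.ite hcs (hGmeas.comp measurable_fst) measurable_const
  have hRHS : (towerMeasure m Δ₀ R).withDensity (fun r => ENNReal.ofReal (g r))
      = Measure.map (fun x => (x, ℓn)) ((m.restrict A).withDensity vG) := by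
    rw [towerWD m hΔ hmR hAmeas hAW hgmeas ?_]
    · congr 1
      apply withDensity_congr_ae
      rw [Filter.EventuallyEq, ae_restrict_iff' hAmeas]
      apply Filter.Eventually.of_forall
      intro x hx
      show ENNReal.ofReal (g (x, ℓn)) = vG x
      have he : g (x, ℓn) = G x := by
        rw [hgdef]; exact if_pos ⟨rfl, hx⟩
      rw [he]
    · intro r hr
      show ENNReal.ofReal (g r) = 0
      have he : g r = 0 := by
        rw [hgdef]; exact if_neg hr
      rw [he, ENNReal.ofReal_zero]
  refine ⟨g, hLHS.trans hRHS.symm, ?_⟩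
  -- the distortion bound
  have hcard : ((Finset.Icc 1 n).filter
      (fun k => ((towerMap f R)^[k] q).2 = 0)).card = i := rfl
  rintro x ⟨rx, hrx, rfl⟩ y ⟨ry, hry, rfl⟩
  rw [hCZ] at hrx hry
  have hrxx : rx = (rx.1, q.2) := by rw [← hrx.2]
  have hryy : ry = (ry.1, q.2) := by rw [← hry.2]
  have hTx : (towerMap f R)^[n] rx = ((inducedF f R)^[i] rx.1, ℓn) := by
    conv_lhs => rw [hrxx]
    rw [hstruct rx.1 hrx.1 n le_rfl]
  have hTy : (towerMap f R)^[n] ry = ((inducedF f R)^[i] ry.1, ℓn) := by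
    conv_lhs => rw [hryy]
    rw [hstruct ry.1 hry.1 n le_rfl]
  rw [hTx, hTy, hcard]
  have hgx : g ((inducedF f R)^[i] rx.1, ℓn) = g₀ ((inducedF f R)^[i] rx.1) := by
    have he : g ((inducedF f R)^[i] rx.1, ℓn) = G ((inducedF f R)^[i] rx.1) := by
      rw [hgdef]; exact if_pos ⟨rfl, hFZA rx.1 hrx.1⟩
    rw [he]
    exact hGeq _ ⟨rx.1, hrx.1, rfl⟩
  have hgy : g ((inducedF f R)^[i] ry.1, ℓn) = g₀ ((inducedF f R)^[i] ry.1) := by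
    have he : g ((inducedF f R)^[i] ry.1, ℓn) = G ((inducedF f R)^[i] ry.1) := by
      rw [hgdef]; exact if_pos ⟨rfl, hFZA ry.1 hry.1⟩
    rw [he]
    exact hGeq _ ⟨ry.1, hry.1, rfl⟩
  rw [hgx, hgy, hg₀Z rx.1 hrx.1, hg₀Z ry.1 hry.1]
  -- final algebra
  have h1 : φ₁ (rx.1, q.2) ≤ (1 + Cφ₁ * β^i) * φ₁ (ry.1, q.2) :=
    hφratio rx.1 hrx.1 ry.1 hry.1
  have h2 : JProd (inducedF f R) J i ry.1
      ≤ Real.exp (CF/(1-β)) * JProd (inducedF f R) J i rx.1 :=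
    hJZbound ry.1 hry.1 rx.1 hrx.1
  have hJx := hJprodpos rx.1 hrx.1
  have hJy := hJprodpos ry.1 hry.1
  have hφy := hφZpos ry.1 hry.1
  have hcpos : 0 < 1 + Cφ₁ * β^i := by nlinarith [mul_pos hCφ0 (pow_pos hβ0 i)]
  have hkey : φ₁ (rx.1, q.2) * JProd (inducedF f R) J i ry.1
      ≤ ((1 + Cφ₁ * β^i) * φ₁ (ry.1, q.2))
        * (Real.exp (CF/(1-β)) * JProd (inducedF f R) J i rx.1) :=
    mul_le_mul h1 h2 hJy.le (by positivity)
  simp only [hρdef]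
  have e3 : (Real.exp (CF/(1-β)) * (1 + Cφ₁ * β ^ i))
      * (φ₁ (ry.1, q.2) / JProd (inducedF f R) J i ry.1)
      = ((Real.exp (CF/(1-β)) * (1 + Cφ₁ * β ^ i)) * φ₁ (ry.1, q.2))
        / JProd (inducedF f R) J i ry.1 := by ring
  rw [e3, div_le_div_iff₀ hJx hJy]
  exact hkey.trans (le_of_eq (by ring))

end WGMPaper
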